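/- arXiv:2406.10014 — 8 statements merged into one kernel-verified Lean document; each statement's English description precedes it below -/
import Mathlib

section
/- Let $k > 1$ and $0 \le \delta < 1$ be real numbers. There exists a constant $C_k > 0$ (depending only on $k$) such that for all real numbers $x, y$ with $1 \le y \le x$, the number of integers $n$ with $x < n \le x + y$ such that $n$ is $k$-powered and the largest prime factor of $n/\kappa(n)$ is at most $y^{1-\delta}$ is at most $C_k \left( y^{(3k+1)/(4k)} + \frac{y^{1-\delta}}{\log(y+1)} \right)$. -/
open scoped Classical

/-- The squarefree kernel `κ(n)`: the product of the distinct primes dividing `n`. -/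
def kappa (n : ℕ) : ℕ := ∏ p ∈ n.primeFactors, p

/-- A positive integer `n` is `k`-powered if `κ(n)^k ≤ n`. -/
noncomputable def IsKPowered (k : ℝ) (n : ℕ) : Prop := (kappa n : ℝ) ^ k ≤ (n : ℝ)

/-!
Write `n = b² s` with `s` squarefree. Then `s ∣ κ(n)` and `b ∣ n / κ(n)`, so a `k`-powered
`n > y` satisfies `b² ≥ n / κ(n) ≥ y^{1 - 1/k}`, hence `b ≥ z` for `z = y^{(k-1)/(4k)}`.
Either `b` has a prime factor `p ≥ z`, and then `p² ∣ n` and `p ≤ y^{1-δ}` since `p ∣ n / κ(n)`;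
or every prime factor of `b` is below `z`, and then `b` has a divisor in `[z, z²)`.
So `d² ∣ n` for one of at most `z² + π(y^{1-δ})` moduli `d ≥ z`, each of which has at most
`2y/d² + 1` multiples of `d²` in the interval. Summing gives `O(y/z + z² + y^{1-δ}/log y)`.
-/

open Finset Real

lemma kappa_pos (n : ℕ) : 0 < kappa n :=
  prod_pos fun _ hp => (Nat.prime_of_mem_primeFactors hp).pos

lemma kappa_sq_mul_dvd (b s : ℕ) : kappa (b ^ 2 * s) ∣ b * s := by
  rcases eq_or_ne b 0 with rfl | hb
  · simp [kappa]
  rcases eq_or_ne s 0 with rfl | hs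
  · simp [kappa]
  have : (b ^ 2 * s).primeFactors = (b * s).primeFactors := by
    rw [Nat.primeFactors_mul (pow_ne_zero 2 hb) hs, Nat.primeFactors_mul hb hs,
      Nat.primeFactors_pow b two_ne_zero]
  rw [kappa, this]
  exact Nat.prod_primeFactors_dvd _

lemma dvd_sq_mul_div_kappa (b s : ℕ) : b ∣ b ^ 2 * s / kappa (b ^ 2 * s) := by
  obtain ⟨c, hc⟩ := kappa_sq_mul_dvd b s
  have h : b ^ 2 * s = kappa (b ^ 2 * s) * (b * c) := calc
    b ^ 2 * s = b * (b * s) := by ring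
    _ = kappa (b ^ 2 * s) * (b * c) := by rw [hc]; ring
  rw [Nat.div_eq_of_eq_mul_right (kappa_pos _) h]
  exact dvd_mul_right b c

lemma Squarefree.dvd_kappa {s n : ℕ} (hs : Squarefree s) (hsn : s ∣ n) (hn : n ≠ 0) :
    s ∣ kappa n := by
  rw [← Nat.prod_primeFactors_of_squarefree hs]
  exact prod_dvd_prod_of_subset _ _ _ (Nat.primeFactors_mono hsn hn)

lemma kappa_le_rpow_inv_of_isKPowered {k : ℝ} (hk : 0 < k) {n : ℕ} (hn : IsKPowered k n) :
    (kappa n : ℝ) ≤ (n : ℝ) ^ k⁻¹ := by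
  calc (kappa n : ℝ) = ((kappa n : ℝ) ^ k) ^ k⁻¹ := by
        rw [← rpow_mul (by positivity), mul_inv_cancel₀ hk.ne', rpow_one]
    _ ≤ (n : ℝ) ^ k⁻¹ := by gcongr; exact hn

lemma exists_sq_dvd_of_isKPowered {k : ℝ} (hk : 0 < k) {n : ℕ} (hn : n ≠ 0)
    (hkn : IsKPowered k n) :
    ∃ b : ℕ, b ^ 2 ∣ n ∧ b ∣ n / kappa n ∧ (n : ℝ) ^ (1 - k⁻¹) ≤ (b : ℝ) ^ 2 := by
  obtain ⟨s, b, rfl, hs⟩ := Nat.sq_mul_squarefree n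
  refine ⟨b, dvd_mul_right _ _, dvd_sq_mul_div_kappa b s, ?_⟩
  set n := b ^ 2 * s
  have hn0 : (0 : ℝ) < n := by exact_mod_cast Nat.pos_of_ne_zero hn
  have hsκ : (s : ℝ) ≤ kappa n := by
    exact_mod_cast Nat.le_of_dvd (kappa_pos n) (hs.dvd_kappa (dvd_mul_left _ _) hn)
  have hnb : (n : ℝ) ≤ (b : ℝ) ^ 2 * (n : ℝ) ^ k⁻¹ := calc
    (n : ℝ) = (b : ℝ) ^ 2 * s := by push_cast [n]; rfl
    _ ≤ (b : ℝ) ^ 2 * (n : ℝ) ^ k⁻¹ := by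
      gcongr; exact hsκ.trans (kappa_le_rpow_inv_of_isKPowered hk hkn)
  rwa [rpow_sub hn0, rpow_one, div_le_iff₀ (by positivity)]

lemma Nat.exists_dvd_mem_Ico_of_forall_prime_lt {a : ℕ} {D Q : ℝ} (hD : 1 ≤ D)
    (hQ : 1 < Q) (hDa : D ≤ a) (hsmall : ∀ p : ℕ, p.Prime → p ∣ a → (p : ℝ) < Q) :
    ∃ d : ℕ, d ∣ a ∧ (d : ℝ) ∈ Set.Ico D (Q * D) := by
  have hex : ∃ d : ℕ, d ∣ a ∧ D ≤ d := ⟨a, dvd_rfl, hDa⟩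
  obtain ⟨hdvd, hDd⟩ := Nat.find_spec hex
  set d := Nat.find hex
  refine ⟨d, hdvd, hDd, lt_of_not_ge fun hQd => ?_⟩
  have hd : 1 < d := by exact_mod_cast (by nlinarith : (1 : ℝ) < d)
  set p := d.minFac
  have hp : p.Prime := Nat.minFac_prime hd.ne'
  have hpd : p ∣ d := Nat.minFac_dvd d
  have hpQ : (p : ℝ) < Q := hsmall p hp (hpd.trans hdvd)
  -- `d / p` is a smaller divisor of `a` that is still at least `D`
  have hDdp : D ≤ (d / p : ℕ) := by
    rw [Nat.cast_div hpd (by exact_mod_cast hp.ne_zero), le_div_iff₀ (by exact_mod_cast hp.pos)]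
    nlinarith
  exact (Nat.div_lt_self (by omega) hp.one_lt).not_ge
    (Nat.find_min' hex ⟨(Nat.div_dvd_of_dvd hpd).trans hdvd, hDdp⟩)

lemma exists_sq_dvd_lt_sq_or_prime_of_sq_dvd {n b : ℕ} {z P : ℝ} (hz : 1 < z) (hb : b ^ 2 ∣ n)
    (hzb : z ≤ b) (hbP : ∀ p : ℕ, p.Prime → p ∣ b → (p : ℝ) ≤ P) :
    ∃ d : ℕ, d ^ 2 ∣ n ∧ z ≤ d ∧ ((d : ℝ) < z ^ 2 ∨ d.Prime ∧ (d : ℝ) ≤ P) := by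
  by_cases hlarge : ∃ p : ℕ, p.Prime ∧ p ∣ b ∧ z ≤ p
  · obtain ⟨p, hp, hpb, hzp⟩ := hlarge
    exact ⟨p, (pow_dvd_pow_of_dvd hpb 2).trans hb, hzp, .inr ⟨hp, hbP p hp hpb⟩⟩
  · push Not at hlarge
    obtain ⟨d, hdb, hzd, hdz⟩ :=
      Nat.exists_dvd_mem_Ico_of_forall_prime_lt hz.le hz hzb hlarge
    exact ⟨d, (pow_dvd_pow_of_dvd hdb 2).trans hb, hzd, .inl (by rwa [sq])⟩

lemma exists_sq_dvd_lt_sq_or_prime_of_isKPowered {k z P : ℝ} (hk : 0 < k) (hz : 1 < z) {n : ℕ}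
    (hn : n ≠ 0) (hzn : z ^ 2 ≤ (n : ℝ) ^ (1 - k⁻¹)) (hkn : IsKPowered k n)
    (hsmooth : ∀ p : ℕ, p.Prime → p ∣ n / kappa n → (p : ℝ) ≤ P) :
    ∃ d : ℕ, d ^ 2 ∣ n ∧ z ≤ d ∧ ((d : ℝ) < z ^ 2 ∨ d.Prime ∧ (d : ℝ) ≤ P) := by
  obtain ⟨b, hbn, hbκ, hnb⟩ := exists_sq_dvd_of_isKPowered hk hn hkn
  have hzb : z ≤ b := le_of_pow_le_pow_left₀ two_ne_zero (Nat.cast_nonneg b) (hzn.trans hnb)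
  exact exists_sq_dvd_lt_sq_or_prime_of_sq_dvd hz hbn hzb fun p hp hpb =>
    hsmooth p hp (hpb.trans hbκ)

lemma card_Ioc_filter_dvd_le {N M : ℕ} (hNM : N ≤ M) {m : ℕ} (hm : 0 < m) :
    (#{n ∈ Ioc N M | m ∣ n} : ℝ) ≤ (M - N) / m + 1 := by
  have hsub : {n ∈ Ioc N M | m ∣ n} ⊆ (Ioc (N / m) (M / m)).image (· * m) := by
    intro n hn
    simp only [mem_filter, mem_Ioc] at hn
    obtain ⟨⟨hNn, hnM⟩, j, rfl⟩ := hn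
    refine mem_image.2 ⟨j, mem_Ioc.2 ⟨?_, ?_⟩, mul_comm j m⟩
    · exact (Nat.div_lt_iff_lt_mul hm).2 (by linarith)
    · exact (Nat.le_div_iff_mul_le hm).2 (by linarith)
  have hcard : #{n ∈ Ioc N M | m ∣ n} ≤ M / m - N / m :=
    (card_le_card hsub).trans (card_image_le.trans (Nat.card_Ioc _ _).le)
  have hM : ((M / m : ℕ) : ℝ) ≤ (M : ℝ) / m := Nat.cast_div_le
  have hN : (N : ℝ) / m < (N / m : ℕ) + 1 := by
    rw [← Nat.floor_div_eq_div (K := ℝ)]; exact Nat.lt_floor_add_one _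
  calc (#{n ∈ Ioc N M | m ∣ n} : ℝ) ≤ ((M / m - N / m : ℕ) : ℝ) := by exact_mod_cast hcard
    _ = (M / m : ℕ) - (N / m : ℕ) := Nat.cast_sub (Nat.div_le_div_right hNM)
    _ ≤ (M - N) / m + 1 := by rw [sub_div]; linarith

lemma sum_inv_sq_le_of_forall_le {m : ℕ} (hm : 0 < m) {E : Finset ℕ} (hE : ∀ d ∈ E, m ≤ d) :
    ∑ d ∈ E, ((d : ℝ) ^ 2)⁻¹ ≤ 2 / m := by
  have hsub : E ⊆ Ioo (m - 1) (E.sup id + 1) := fun d hd =>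
    mem_Ioo.2 ⟨by have := hE d hd; omega, Nat.lt_succ_of_le (le_sup (f := id) hd)⟩
  calc ∑ d ∈ E, ((d : ℝ) ^ 2)⁻¹ ≤ ∑ d ∈ Ioo (m - 1) (E.sup id + 1), ((d : ℝ) ^ 2)⁻¹ :=
        sum_le_sum_of_subset_of_nonneg hsub fun _ _ _ => by positivity
    _ ≤ 2 / ((m - 1 : ℕ) + 1 : ℝ) := sum_Ioo_inv_sq_le _ _
    _ = 2 / m := by rw [← Nat.cast_add_one, Nat.sub_add_cancel hm]

lemma card_Ioc_filter_exists_sq_dvd_le {N M : ℕ} (hNM : N ≤ M) {m : ℕ} (hm : 0 < m)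
    {E : Finset ℕ} (hE : ∀ d ∈ E, m ≤ d) :
    (#{n ∈ Ioc N M | ∃ d ∈ E, d ^ 2 ∣ n} : ℝ) ≤ 2 * (M - N) / m + #E := by
  have hsub : {n ∈ Ioc N M | ∃ d ∈ E, d ^ 2 ∣ n}
      ⊆ E.biUnion fun d => {n ∈ Ioc N M | d ^ 2 ∣ n} := by
    intro n hn
    obtain ⟨hnI, d, hd, hdn⟩ := mem_filter.1 hn
    exact mem_biUnion.2 ⟨d, hd, mem_filter.2 ⟨hnI, hdn⟩⟩
  have hMN : (0 : ℝ) ≤ M - N := by rw [sub_nonneg]; exact_mod_cast hNM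
  calc (#{n ∈ Ioc N M | ∃ d ∈ E, d ^ 2 ∣ n} : ℝ)
      ≤ ∑ d ∈ E, (#{n ∈ Ioc N M | d ^ 2 ∣ n} : ℝ) := by
        exact_mod_cast (card_le_card hsub).trans card_biUnion_le
    _ ≤ ∑ d ∈ E, ((M - N) * ((d : ℝ) ^ 2)⁻¹ + 1) := sum_le_sum fun d hd => by
        have hd : 0 < d := hm.trans_le (hE d hd)
        simpa [div_eq_mul_inv] using card_Ioc_filter_dvd_le hNM (pow_pos hd 2)
    _ = (M - N) * ∑ d ∈ E, ((d : ℝ) ^ 2)⁻¹ + #E := by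
        rw [sum_add_distrib, mul_sum, sum_const, nsmul_one]
    _ ≤ (M - N) * (2 / m) + #E := by gcongr; exact sum_inv_sq_le_of_forall_le hm hE
    _ = 2 * (M - N) / m + #E := by ring

lemma card_primes_ge_mul_log_le {z x : ℝ} (hz : 0 < z) (hx : 0 ≤ x) :
    (#{p ∈ Ioc 0 ⌊x⌋₊ | Nat.Prime p ∧ z ≤ p} : ℝ) * log z ≤ log 4 * x := calc
  (#{p ∈ Ioc 0 ⌊x⌋₊ | Nat.Prime p ∧ z ≤ p} : ℝ) * log z
      = ∑ p ∈ Ioc 0 ⌊x⌋₊ with Nat.Prime p ∧ z ≤ p, log z := by rw [sum_const, nsmul_eq_mul]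
  _ ≤ ∑ p ∈ Ioc 0 ⌊x⌋₊ with Nat.Prime p ∧ z ≤ p, log p :=
      sum_le_sum fun p hp => log_le_log hz (mem_filter.1 hp).2.2
  _ ≤ Chebyshev.theta x :=
      sum_le_sum_of_subset_of_nonneg (monotone_filter_right _ fun _ _ => And.left)
        fun p _ _ => log_natCast_nonneg p
  _ ≤ log 4 * x := Chebyshev.theta_le_log4_mul_x hx

lemma card_isKPowered_smooth_le {k z P : ℝ} (hk : 1 ≤ k) (hz : 1 < z) (hP : 0 ≤ P)
    {N M : ℕ} (hNM : N ≤ M) (hzN : z ^ 2 ≤ ((N : ℝ) + 1) ^ (1 - k⁻¹)) :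
    (#{n ∈ Ioc N M | IsKPowered k n ∧
        ∀ p : ℕ, p.Prime → p ∣ n / kappa n → (p : ℝ) ≤ P} : ℝ)
      ≤ 2 * (M - N) / z + z ^ 2 + log 4 * P / log z := by
  set Esmall : Finset ℕ := {d ∈ Icc 1 ⌊z ^ 2⌋₊ | z ≤ d}
  set Eprime : Finset ℕ := {p ∈ Ioc 0 ⌊P⌋₊ | Nat.Prime p ∧ z ≤ p}
  set E := Esmall ∪ Eprime
  have hzE : ∀ d ∈ E, ⌈z⌉₊ ≤ d := by
    intro d hd
    rcases mem_union.1 hd with hd | hd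
    · exact Nat.ceil_le.2 (mem_filter.1 hd).2
    · exact Nat.ceil_le.2 (mem_filter.1 hd).2.2
  have hcover : {n ∈ Ioc N M | IsKPowered k n ∧ ∀ p : ℕ, p.Prime → p ∣ n / kappa n → (p : ℝ) ≤ P}
      ⊆ {n ∈ Ioc N M | ∃ d ∈ E, d ^ 2 ∣ n} := by
    intro n hn
    obtain ⟨hnI, hkn, hsmooth⟩ := mem_filter.1 hn
    have hNn : N < n := (mem_Ioc.1 hnI).1
    have hzn : z ^ 2 ≤ (n : ℝ) ^ (1 - k⁻¹) := hzN.trans (by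
      gcongr
      · exact sub_nonneg.2 (inv_le_one_of_one_le₀ hk)
      · exact_mod_cast hNn)
    obtain ⟨d, hdn, hzd, hd⟩ :=
      exists_sq_dvd_lt_sq_or_prime_of_isKPowered (by linarith) hz (by omega) hzn hkn hsmooth
    refine mem_filter.2 ⟨hnI, d, ?_, hdn⟩
    have hd0 : 0 < d := by exact_mod_cast (by linarith : (0 : ℝ) < d)
    rcases hd with hd | ⟨hdp, hdP⟩
    · exact mem_union_left _ (mem_filter.2 ⟨mem_Icc.2 ⟨hd0, Nat.le_floor hd.le⟩, hzd⟩)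
    · exact mem_union_right _ (mem_filter.2 ⟨mem_Ioc.2 ⟨hd0, Nat.le_floor hdP⟩, hdp, hzd⟩)
  have hcardE : (#E : ℝ) ≤ z ^ 2 + log 4 * P / log z := by
    have hlogz : 0 < log z := log_pos hz
    have hsmall : (#Esmall : ℝ) ≤ z ^ 2 := by
      calc (#Esmall : ℝ) ≤ #(Icc 1 ⌊z ^ 2⌋₊) := by
            exact_mod_cast card_filter_le _ _
        _ ≤ z ^ 2 := by rw [Nat.card_Icc, Nat.add_sub_cancel]; exact Nat.floor_le (by positivity)
    have hprimes : (#Eprime : ℝ) ≤ log 4 * P / log z := by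
      rw [le_div_iff₀ hlogz]; exact card_primes_ge_mul_log_le (by linarith) hP
    calc (#E : ℝ) ≤ #Esmall + #Eprime := by
          exact_mod_cast card_union_le _ _
      _ ≤ z ^ 2 + log 4 * P / log z := add_le_add hsmall hprimes
  have hMN : (0 : ℝ) ≤ M - N := by rw [sub_nonneg]; exact_mod_cast hNM
  calc _ ≤ (#{n ∈ Ioc N M | ∃ d ∈ E, d ^ 2 ∣ n} : ℝ) := by exact_mod_cast card_le_card hcover
    _ ≤ 2 * (M - N) / ⌈z⌉₊ + #E :=
        card_Ioc_filter_exists_sq_dvd_le hNM (Nat.ceil_pos.2 (by linarith)) hzE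
    _ ≤ 2 * (M - N) / z + (z ^ 2 + log 4 * P / log z) := by
        gcongr
        exact Nat.le_ceil z
    _ = _ := by ring

lemma log_add_one_le_two_mul_log {y : ℝ} (hy : 2 ≤ y) : log (y + 1) ≤ 2 * log y := by
  rw [← log_rpow (by linarith), rpow_two]
  exact log_le_log (by linarith) (by nlinarith)

lemma natCast_floor_add_sub_floor_le {x y : ℝ} (hx : 0 ≤ x) (hy : 0 ≤ y) :
    (⌊x + y⌋₊ : ℝ) - ⌊x⌋₊ ≤ y + 1 := by
  linarith [Nat.floor_le (by linarith : 0 ≤ x + y), Nat.lt_floor_add_one x]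

lemma card_isKPowered_smooth_Ioc_floor_le {k κ P x y : ℝ} (hk : 1 ≤ k) (hκ : 0 < κ)
    (hκ3 : 3 * κ ≤ 1) (hκk : 2 * κ ≤ 1 - k⁻¹) (hP : 0 ≤ P) (hy : 2 ≤ y) (hxy : y ≤ x) :
    (#{n ∈ Ioc ⌊x⌋₊ ⌊x + y⌋₊ | IsKPowered k n ∧
        ∀ p : ℕ, p.Prime → p ∣ n / kappa n → (p : ℝ) ≤ P} : ℝ)
      ≤ 5 * y ^ (1 - κ) + 2 * log 4 / κ * (P / log (y + 1)) := by
  have hy0 : 0 < y := by linarith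
  have hz : 1 < y ^ κ := one_lt_rpow (by linarith) hκ
  have hNM : ⌊x⌋₊ ≤ ⌊x + y⌋₊ := Nat.floor_mono (by linarith)
  have hzN : (y ^ κ) ^ 2 ≤ ((⌊x⌋₊ : ℝ) + 1) ^ (1 - k⁻¹) := calc
    (y ^ κ) ^ 2 = y ^ (2 * κ) := by rw [← rpow_natCast, ← rpow_mul hy0.le, mul_comm]; norm_num
    _ ≤ y ^ (1 - k⁻¹) := rpow_le_rpow_of_exponent_le (by linarith) hκk
    _ ≤ ((⌊x⌋₊ : ℝ) + 1) ^ (1 - k⁻¹) := by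
        gcongr
        · exact sub_nonneg.2 (inv_le_one_of_one_le₀ hk)
        · linarith [Nat.lt_floor_add_one x]
  have hquot : 2 * ((⌊x + y⌋₊ : ℝ) - ⌊x⌋₊) / y ^ κ ≤ 4 * y ^ (1 - κ) := calc
    2 * ((⌊x + y⌋₊ : ℝ) - ⌊x⌋₊) / y ^ κ ≤ 2 * (2 * y) / y ^ κ := by
      gcongr; linarith [natCast_floor_add_sub_floor_le (by linarith) hy0.le (x := x)]
    _ = 4 * y ^ (1 - κ) := by rw [rpow_sub hy0, rpow_one]; ring
  have hsq : (y ^ κ) ^ 2 ≤ y ^ (1 - κ) := by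
    rw [← rpow_natCast, ← rpow_mul hy0.le]
    exact rpow_le_rpow_of_exponent_le (by linarith) (by push_cast; linarith)
  have hlog : log 4 * P / log (y ^ κ) ≤ 2 * log 4 / κ * (P / log (y + 1)) := by
    have hlog : 0 < log (y + 1) := log_pos (by linarith)
    calc log 4 * P / log (y ^ κ) = (log 4 * P / κ) / log y := by
          rw [log_rpow hy0]; field_simp
      _ ≤ (log 4 * P / κ) / (log (y + 1) / 2) := by
          gcongr; linarith [log_add_one_le_two_mul_log hy]
      _ = _ := by field_simp
  linarith [card_isKPowered_smooth_le hk hz hP hNM hzN]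

theorem stmt0_general (k δ : ℝ) (hk : 1 < k) :
    ∃ C : ℝ, 0 < C ∧ ∀ x y : ℝ, 1 ≤ y → y ≤ x →
      (((Finset.Ioc ⌊x⌋₊ ⌊x + y⌋₊).filter (fun n =>
          IsKPowered k n ∧
          ∀ p : ℕ, p.Prime → p ∣ n / kappa n → (p : ℝ) ≤ y ^ (1 - δ))).card : ℝ)
        ≤ C * (y ^ ((3 * k + 1) / (4 * k)) + y ^ (1 - δ) / Real.log (y + 1)) := by
  set κ := (k - 1) / (4 * k) with hκ
  have hκ0 : 0 < κ := div_pos (by linarith) (by linarith)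
  have hθ : (3 * k + 1) / (4 * k) = 1 - κ := by rw [hκ]; field_simp; ring
  have hκ3 : 3 * κ ≤ 1 := by rw [hκ, mul_div_assoc', div_le_one (by linarith)]; linarith
  have hκk : 2 * κ ≤ 1 - k⁻¹ := by
    rw [hκ]; field_simp; linarith
  have hc : 0 < 2 * log 4 / κ := div_pos (by positivity) hκ0
  refine ⟨5 + 2 * log 4 / κ, by linarith, fun x y hy hxy => ?_⟩
  have hyθ : 1 ≤ y ^ (1 - κ) := one_le_rpow hy (by linarith)
  have hsmooth : 0 ≤ y ^ (1 - δ) / log (y + 1) :=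
    div_nonneg (rpow_nonneg (by linarith) _) (log_nonneg (by linarith))
  rw [hθ]
  rcases lt_or_ge y 2 with hy2 | hy2
  · have hNM : ⌊x⌋₊ ≤ ⌊x + y⌋₊ := Nat.floor_mono (by linarith)
    calc _ ≤ (#(Ioc ⌊x⌋₊ ⌊x + y⌋₊) : ℝ) := by exact_mod_cast card_filter_le _ _
      _ ≤ 5 * y ^ (1 - κ) := by
          rw [Nat.card_Ioc, Nat.cast_sub hNM]
          linarith [natCast_floor_add_sub_floor_le (by linarith) (by linarith) (x := x) (y := y)]
      _ ≤ _ := by nlinarith [mul_nonneg hc.le hsmooth]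
  · have := card_isKPowered_smooth_Ioc_floor_le hk.le hκ0 hκ3 hκk
      (rpow_nonneg (by linarith : (0 : ℝ) ≤ y) (1 - δ)) hy2 hxy
    nlinarith [mul_nonneg hc.le hsmooth]

theorem stmt0 (k δ : ℝ) (hk : 1 < k) (hδ0 : 0 ≤ δ) (hδ1 : δ < 1) :
    ∃ C : ℝ, 0 < C ∧ ∀ x y : ℝ, 1 ≤ y → y ≤ x →
      (((Finset.Ioc ⌊x⌋₊ ⌊x + y⌋₊).filter (fun n =>
          IsKPowered k n ∧
          ∀ p : ℕ, p.Prime → p ∣ n / kappa n → (p : ℝ) ≤ y ^ (1 - δ))).card : ℝ)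
        ≤ C * (y ^ ((3 * k + 1) / (4 * k)) + y ^ (1 - δ) / Real.log (y + 1)) :=
  stmt0_general k δ hk
end

section
/- There exists an absolute constant $C > 0$ such that the following holds. Let $\alpha > 1/2$ be a real number, let $y \ge 3$ and $x \ge 0$ be real numbers, and let $w$ be a real number with $2 \le w \le y^{1/8}$. Then the number of integers $n$ with $x < n \le x + y$ such that $n$ has a divisor $d$ with $d > y^{\alpha}$ and $d$ being $w$-smooth is at most $C \, y \left( \exp\left(-\frac{\log y}{2 \log w}\right) + y^{-1/6} \right)$. -/
/-!
Rankin's trick, applied separately to dyadic bands of primes. Sort the primes `p ≤ w` into the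
bands `log w / 2 ^ (j + 1) < log p ≤ log w / 2 ^ j` for `j < J`, where `J` is the first index
with `log w / 2 ^ J ≤ 20`, and put the remaining small primes into band `J`. A `w`-smooth
divisor `d > y ^ (1 / 2)` has, in some band `j`, a part larger than `T_j = y ^ (η_j / 2)`,
where `∑ η_j ≤ 1`; removing primes one at a time from that part leaves a divisor
`b ∈ (T_j, y]` made of band-`j` primes. Such a `b` divides at most `3 y / b` of the integers
in `(x, x + y]`, and Rankin's bound `∑_{b > T} 1 / b ≤ T ^ (-δ) ∏_p (1 - p ^ (δ - 1))⁻¹`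
with `δ_j = 9 · 2 ^ j / log w` costs only an absolute constant per band, since by Chebyshev's
bound `∑ 1 / p` over a band is bounded. With `η_j = (2 / 15) (3 / 5) ^ j` band `j` contributes
`exp (-(3 / 5) (6 / 5) ^ j log y / log w) ≤ 2 ^ (-j) exp (-log y / (2 log w))`, and band `J`,
with `η_J = 2 / 3` and `δ = 1 / 2`, contributes `y ^ (-1 / 6)`.
-/

open scoped Classical

open Real Finset

lemma sum_log_div_primesLE_two_pow_le (K : ℕ) :
    ∑ p ∈ Nat.primesLE (2 ^ K), log p / p ≤ 2 * log 4 * K := by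
  induction K with
  | zero => simp
  | succ k ih =>
    have hk : 2 ^ k ≤ 2 ^ (k + 1) := Nat.pow_le_pow_right (by norm_num) k.le_succ
    have hlow : {p ∈ Nat.primesLE (2 ^ (k + 1)) | ¬2 ^ k < p} = Nat.primesLE (2 ^ k) := by
      ext p
      simp only [mem_filter, Nat.mem_primesLE, not_lt]
      constructor
      · rintro ⟨⟨-, hp⟩, hpk⟩
        exact ⟨hpk, hp⟩
      · rintro ⟨hpk, hp⟩
        exact ⟨⟨hpk.trans hk, hp⟩, hpk⟩
    have htop : ∑ p ∈ Nat.primesLE (2 ^ (k + 1)) with 2 ^ k < p, log p / p ≤ 2 * log 4 := by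
      calc ∑ p ∈ Nat.primesLE (2 ^ (k + 1)) with 2 ^ k < p, log p / p
          ≤ ∑ p ∈ Nat.primesLE (2 ^ (k + 1)) with 2 ^ k < p, log p / 2 ^ k := by
            refine sum_le_sum fun p hp => ?_
            simp only [mem_filter, Nat.mem_primesLE] at hp
            exact div_le_div_of_nonneg_left (log_nonneg (by exact_mod_cast hp.1.2.one_le))
              (by positivity) (by exact_mod_cast hp.2.le)
        _ ≤ (∑ p ∈ Nat.primesLE (2 ^ (k + 1)), log p) / 2 ^ k := by
            rw [← sum_div]
            gcongr
            exact filter_subset _ _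
        _ ≤ log 4 * 2 ^ (k + 1) / 2 ^ k := by
            rw [← Chebyshev.theta_eq_sum_primesLE_log]
            gcongr
            exact_mod_cast Chebyshev.theta_le_log4_mul_x (by positivity)
        _ = 2 * log 4 := by field_simp; ring
    rw [← sum_filter_add_sum_filter_not _ (fun p => 2 ^ k < p), hlow]
    push_cast
    linarith

lemma sum_one_div_primes_le_of_log_mem_Ioc {μ : ℝ} (hμ : 1 ≤ μ) {P : Finset ℕ}
    (hP : ∀ p ∈ P, p.Prime ∧ log p ∈ Set.Ioc μ (2 * μ)) :
    ∑ p ∈ P, (1 : ℝ) / p ≤ 12 := by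
  set K := ⌈2 * μ / log 2⌉₊
  have hlog2 : 0 < log 2 := log_pos one_lt_two
  have hK : (K : ℝ) < 2 * μ / log 2 + 1 := Nat.ceil_lt_add_one (by positivity)
  have hPK : P ⊆ Nat.primesLE (2 ^ K) := fun p hp => by
    obtain ⟨hp, -, hpμ⟩ := hP p hp
    refine Nat.mem_primesLE.2 ⟨?_, hp⟩
    have : log p ≤ log ((2 : ℕ) ^ K) := by
      push_cast
      rw [Real.log_pow]
      calc log p ≤ 2 * μ := hpμ
        _ ≤ K * log 2 := (div_le_iff₀ hlog2).1 (Nat.le_ceil _)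
    exact_mod_cast (log_le_log_iff (by exact_mod_cast hp.pos) (by positivity)).1 this
  calc ∑ p ∈ P, (1 : ℝ) / p ≤ ∑ p ∈ P, log p / p / μ := by
        refine sum_le_sum fun p hp => ?_
        rw [le_div_iff₀ (by linarith), one_div_mul_eq_div]
        exact div_le_div_of_nonneg_right (hP p hp).2.1.le (Nat.cast_nonneg p)
    _ ≤ (∑ p ∈ Nat.primesLE (2 ^ K), log p / p) / μ := by
        rw [← sum_div]
        gcongr
    _ ≤ 2 * log 4 * K / μ := by gcongr; exact sum_log_div_primesLE_two_pow_le K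
    _ ≤ 12 := by
        rw [div_le_iff₀ (by positivity), show (4 : ℝ) = 2 ^ 2 by norm_num, Real.log_pow]
        have h2 : log 2 < 1 := by linarith [log_two_lt_d9]
        have := (lt_div_iff₀ hlog2).1 (by linarith [hK] : (K : ℝ) - 1 < 2 * μ / log 2)
        push_cast
        nlinarith

lemma sum_pow_le_inv_one_sub {t : ℝ} (h0 : 0 ≤ t) (h1 : t < 1) (E : Finset ℕ) :
    ∑ e ∈ E, t ^ e ≤ (1 - t)⁻¹ := by
  rw [← tsum_geometric_of_lt_one h0 h1]
  exact (summable_geometric_of_lt_one h0 h1).sum_le_tsum E fun _ _ => pow_nonneg h0 _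

lemma sum_rpow_le_prod_inv_one_sub {r : ℝ} {P : Finset ℕ} (hP : ∀ p ∈ P, (p : ℝ) ^ r < 1)
    {S : Finset ℕ} (hS : (S : Set ℕ) ⊆ Nat.factoredNumbers P) :
    ∑ b ∈ S, (b : ℝ) ^ r ≤ ∏ p ∈ P, (1 - (p : ℝ) ^ r)⁻¹ := by
  induction P using Finset.induction_on generalizing S with
  | empty =>
    rw [Nat.factoredNumbers_empty, Set.subset_singleton_iff] at hS
    calc ∑ b ∈ S, (b : ℝ) ^ r ≤ ∑ b ∈ ({1} : Finset ℕ), (b : ℝ) ^ r :=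
          sum_le_sum_of_subset_of_nonneg (fun b hb => by simp [hS b hb]) fun _ _ _ => by positivity
      _ = _ := by simp
  | insert q P hq ih =>
    have hqr := hP q (mem_insert_self q P)
    -- every `b ∈ S` is `q ^ e * c` with `c` free of the prime `q`
    set E := S.image (·.factorization q)
    set M := S.image fun b => b / q ^ b.factorization q
    have hM : (M : Set ℕ) ⊆ Nat.factoredNumbers P := by
      simp only [M, coe_image, Set.image_subset_iff]
      intro b hb
      have hb0 := Nat.ne_zero_of_mem_factoredNumbers (hS hb)
      refine Nat.mem_factoredNumbers'.2 fun p hp hpc => ?_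
      have hpb := hpc.trans (Nat.ordCompl_dvd b q)
      refine (mem_insert.1 (Nat.mem_factoredNumbers'.1 (hS hb) p hp hpb)).resolve_left ?_
      rintro rfl
      exact Nat.not_dvd_ordCompl hp hb0 hpc
    have hSEM : S ⊆ (E ×ˢ M).image fun ec => q ^ ec.1 * ec.2 := fun b hb =>
      mem_image.2 ⟨(b.factorization q, b / q ^ b.factorization q),
        mem_product.2 ⟨mem_image_of_mem _ hb, mem_image_of_mem _ hb⟩,
        Nat.ordProj_mul_ordCompl_eq_self b q⟩
    calc ∑ b ∈ S, (b : ℝ) ^ r ≤ ∑ b ∈ (E ×ˢ M).image (fun ec : ℕ × ℕ => q ^ ec.1 * ec.2),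
          (b : ℝ) ^ r :=
          sum_le_sum_of_subset_of_nonneg hSEM fun _ _ _ => by positivity
      _ ≤ ∑ ec ∈ E ×ˢ M, (((q ^ ec.1 * ec.2 : ℕ) : ℝ)) ^ r :=
          sum_image_le_of_nonneg fun _ _ => by positivity
      _ = (∑ e ∈ E, ((q : ℝ) ^ r) ^ e) * ∑ c ∈ M, (c : ℝ) ^ r := by
          rw [sum_product, sum_mul_sum]
          refine sum_congr rfl fun e _ => sum_congr rfl fun c _ => ?_
          push_cast
          rw [mul_rpow (by positivity) (by positivity), rpow_pow_comm (by positivity)]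
      _ ≤ (1 - (q : ℝ) ^ r)⁻¹ * ∏ p ∈ P, (1 - (p : ℝ) ^ r)⁻¹ := by
          have := ih (fun p hp => hP p (mem_insert_of_mem hp)) hM
          gcongr
          exact sum_pow_le_inv_one_sub (by positivity) hqr E
      _ = ∏ p ∈ insert q P, (1 - (p : ℝ) ^ r)⁻¹ := by rw [prod_insert hq]

lemma sum_one_div_le_rpow_neg_mul_prod {δ T : ℝ} (hδ : 0 ≤ δ) (hT : 0 < T) {P S : Finset ℕ}
    (hP : ∀ p ∈ P, (p : ℝ) ^ (δ - 1) < 1) (hS : (S : Set ℕ) ⊆ Nat.factoredNumbers P)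
    (hST : ∀ b ∈ S, T < b) :
    ∑ b ∈ S, (1 : ℝ) / b ≤ T ^ (-δ) * ∏ p ∈ P, (1 - (p : ℝ) ^ (δ - 1))⁻¹ := by
  calc ∑ b ∈ S, (1 : ℝ) / b ≤ ∑ b ∈ S, T ^ (-δ) * (b : ℝ) ^ (δ - 1) := by
        refine sum_le_sum fun b hb => ?_
        have hTb : T ^ δ ≤ (b : ℝ) ^ δ := rpow_le_rpow hT.le (hST b hb).le hδ
        rw [rpow_neg hT.le, rpow_sub_one (hT.trans (hST b hb)).ne', ← mul_div_assoc,
          inv_mul_eq_div]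
        gcongr
        exact (one_le_div₀ (by positivity)).2 hTb
    _ = T ^ (-δ) * ∑ b ∈ S, (b : ℝ) ^ (δ - 1) := (mul_sum _ _ _).symm
    _ ≤ _ := by gcongr; exact sum_rpow_le_prod_inv_one_sub hP hS

lemma inv_one_sub_le_exp {t : ℝ} (h0 : 0 ≤ t) (h1 : t ≤ 3 / 4) : (1 - t)⁻¹ ≤ exp (4 * t) := by
  calc (1 - t)⁻¹ ≤ 1 + 4 * t := by
        rw [inv_le_iff_one_le_mul₀ (by linarith)]
        nlinarith
    _ ≤ exp (4 * t) := by linarith [add_one_le_exp (4 * t)]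

lemma prod_inv_one_sub_le_exp_sum {P : Finset ℕ} {f : ℕ → ℝ}
    (hf : ∀ p ∈ P, 0 ≤ f p ∧ f p ≤ 3 / 4) :
    ∏ p ∈ P, (1 - f p)⁻¹ ≤ exp (4 * ∑ p ∈ P, f p) := by
  rw [mul_sum, exp_sum]
  exact prod_le_prod (fun p hp => inv_nonneg.2 (by linarith [(hf p hp).2]))
    fun p hp => inv_one_sub_le_exp (hf p hp).1 (hf p hp).2

lemma exists_dvd_lt_le_mul {T v : ℝ} (hT : 1 ≤ T) {D : ℕ} (hD : T < D)
    (hv : ∀ p ∈ D.primeFactors, (p : ℝ) ≤ v) : ∃ b, b ∣ D ∧ T < b ∧ (b : ℝ) ≤ T * v := by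
  induction D using Nat.strong_induction_on with
  | _ D ih =>
  by_cases hDv : (D : ℝ) ≤ T * v
  · exact ⟨D, dvd_rfl, hD, hDv⟩
  rw [not_le] at hDv
  have hD0 : D ≠ 0 := by rintro rfl; simp at hD; linarith
  have hD1 : D ≠ 1 := by rintro rfl; simp at hD; linarith
  obtain ⟨p, hp, hpD⟩ := Nat.exists_prime_and_dvd hD1
  have hpv := hv p (Nat.mem_primeFactors.2 ⟨hp, hpD, hD0⟩)
  have hTD : T < ((D / p : ℕ) : ℝ) := by
    rw [Nat.cast_div hpD (by exact_mod_cast hp.ne_zero), lt_div_iff₀ (by exact_mod_cast hp.pos)]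
    calc T * p ≤ T * v := by gcongr
      _ < D := hDv
  obtain ⟨b, hb, hTb, hbT⟩ := ih (D / p) (Nat.div_lt_self (Nat.pos_of_ne_zero hD0) hp.one_lt)
    hTD fun q hq => hv q (Nat.primeFactors_mono (Nat.div_dvd_of_dvd hpD) hD0 hq)
  exact ⟨b, hb.trans (Nat.div_dvd_of_dvd hpD), hTb, hbT⟩

lemma exists_dvd_lt_of_prod_lt {ι : Type*} (s : Finset ι) (g : ℕ → ι) {T : ι → ℝ} {d : ℕ}
    (hd : d ≠ 0) (hg : ∀ p ∈ d.primeFactors, g p ∈ s) (hdT : ∏ i ∈ s, T i < d) :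
    ∃ i ∈ s, ∃ D, D ∣ d ∧ T i < D ∧ ∀ p ∈ D.primeFactors, g p = i := by
  set part : ι → ℕ := fun i => ∏ p ∈ d.primeFactors with g p = i, p ^ d.factorization p
  have hprod : ∏ i ∈ s, part i = d := by
    rw [prod_fiberwise_of_maps_to hg, ← Nat.prod_primeFactors_pow_factorization hd]
  obtain ⟨i, hi, hTi⟩ : ∃ i ∈ s, T i < part i := by
    by_contra! h
    have : (d : ℝ) ≤ ∏ i ∈ s, T i := by
      rw [← hprod]
      push_cast
      exact prod_le_prod (fun i _ => by positivity) h
    linarith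
  refine ⟨i, hi, part i, hprod ▸ dvd_prod_of_mem part hi, hTi, fun p hp => ?_⟩
  have hp' := Nat.prime_of_mem_primeFactors hp
  obtain ⟨q, hq, hpq⟩ := (hp'.prime.dvd_finsetProd_iff _).1 (Nat.dvd_of_mem_primeFactors hp)
  rw [mem_filter] at hq
  rw [(Nat.prime_dvd_prime_iff_eq hp' (Nat.prime_of_mem_primeFactors hq.1)).1
    (hp'.dvd_of_dvd_pow hpq)]
  exact hq.2

lemma card_filter_dvd_Ioc_le {a c b : ℕ} (hb : 0 < b) (hac : a ≤ c) :
    (#{n ∈ Ioc a c | b ∣ n} : ℝ) ≤ ((c : ℝ) - a) / b + 1 := by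
  have hsplit : {n ∈ Ioc a c | b ∣ n} = {n ∈ Ioc 0 c | b ∣ n} \ {n ∈ Ioc 0 a | b ∣ n} := by
    ext n
    simp only [mem_filter, mem_Ioc, mem_sdiff]
    omega
  have hsub : {n ∈ Ioc 0 a | b ∣ n} ⊆ {n ∈ Ioc 0 c | b ∣ n} :=
    filter_subset_filter _ (Ioc_subset_Ioc_right hac)
  rw [hsplit, card_sdiff_of_subset hsub, Nat.Ioc_filter_dvd_card_eq_div,
    Nat.Ioc_filter_dvd_card_eq_div, Nat.cast_sub (Nat.div_le_div_right hac)]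
  have hb' : (0 : ℝ) < b := by exact_mod_cast hb
  have hc : ((c / b : ℕ) : ℝ) ≤ c / b := Nat.cast_div_le
  have ha : (a : ℝ) / b - 1 ≤ ((a / b : ℕ) : ℝ) := by
    rw [sub_le_iff_le_add, div_le_iff₀ hb']
    have : a ≤ (a / b + 1) * b := by
      rw [add_mul, one_mul]
      exact (Nat.lt_div_mul_add hb).le
    exact_mod_cast this
  rw [sub_div]
  linarith

lemma card_filter_dvd_Ioc_floor_le {x y : ℝ} (hx : 0 ≤ x) {b : ℕ} (hb : 1 ≤ b) (hby : (b : ℝ) ≤ y) :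
    (#{n ∈ Ioc ⌊x⌋₊ ⌊x + y⌋₊ | b ∣ n} : ℝ) ≤ 3 * y / b := by
  have hb' : (1 : ℝ) ≤ b := by exact_mod_cast hb
  have hlen : (⌊x + y⌋₊ : ℝ) - ⌊x⌋₊ ≤ y + 1 := by
    linarith [Nat.floor_le (by linarith : 0 ≤ x + y), Nat.lt_floor_add_one x]
  calc (#{n ∈ Ioc ⌊x⌋₊ ⌊x + y⌋₊ | b ∣ n} : ℝ) ≤ ((⌊x + y⌋₊ : ℝ) - ⌊x⌋₊) / b + 1 :=
        card_filter_dvd_Ioc_le hb (Nat.floor_le_floor (by linarith))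
    _ ≤ (y + 1) / b + b / b := by rw [div_self (by positivity)]; gcongr
    _ ≤ 3 * y / b := by rw [← add_div]; gcongr; linarith

lemma card_le_three_mul_sum_sum_one_div {ι : Type*} {x y : ℝ} (hx : 0 ≤ x) {s : Finset ι}
    {B : ι → Finset ℕ} (hB : ∀ i ∈ s, ∀ b ∈ B i, 1 ≤ b ∧ (b : ℝ) ≤ y) {A : Finset ℕ}
    (hA : A ⊆ Ioc ⌊x⌋₊ ⌊x + y⌋₊) (hcover : ∀ n ∈ A, ∃ i ∈ s, ∃ b ∈ B i, b ∣ n) :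
    (#A : ℝ) ≤ 3 * y * ∑ i ∈ s, ∑ b ∈ B i, (1 : ℝ) / b := by
  have hsub : A ⊆ s.biUnion fun i => (B i).biUnion fun b => {n ∈ Ioc ⌊x⌋₊ ⌊x + y⌋₊ | b ∣ n} := by
    intro n hn
    obtain ⟨i, hi, b, hb, hbn⟩ := hcover n hn
    simp only [mem_biUnion, mem_filter]
    exact ⟨i, hi, b, hb, hA hn, hbn⟩
  calc (#A : ℝ) ≤ ∑ i ∈ s, ∑ b ∈ B i, (#{n ∈ Ioc ⌊x⌋₊ ⌊x + y⌋₊ | b ∣ n} : ℝ) := by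
        norm_cast
        exact (card_le_card hsub).trans
          (card_biUnion_le.trans (sum_le_sum fun i _ => card_biUnion_le))
    _ ≤ ∑ i ∈ s, ∑ b ∈ B i, 3 * y / b := by
        gcongr with i hi b hb
        exact card_filter_dvd_Ioc_floor_le hx (hB i hi b hb).1 (hB i hi b hb).2
    _ = 3 * y * ∑ i ∈ s, ∑ b ∈ B i, (1 : ℝ) / b := by
        simp only [mul_sum, mul_one_div]

lemma sum_one_div_factoredNumbers_le_of_log_mem_Ioc {L T : ℝ} (hL : 20 ≤ L) (hT : 0 < T)
    {P S : Finset ℕ} (hP : ∀ p ∈ P, p.Prime ∧ log p ∈ Set.Ioc (L / 2) L)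
    (hS : (S : Set ℕ) ⊆ Nat.factoredNumbers P) (hST : ∀ b ∈ S, T < b) :
    ∑ b ∈ S, (1 : ℝ) / b ≤ T ^ (-(9 / L)) * exp (48 * exp 9) := by
  -- `p ^ (9 / L) ≤ exp 9` on the band, and `log p > 10` makes each local factor small
  have hterm : ∀ p ∈ P, (p : ℝ) ^ (9 / L - 1) ≤ exp (9 - log p) := fun p hp => by
    obtain ⟨hp, -, hpL⟩ := hP p hp
    rw [rpow_def_of_pos (by exact_mod_cast hp.pos)]
    gcongr
    have : log p / L ≤ 1 := div_le_one_of_le₀ hpL (by linarith)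
    have : log p * (9 / L - 1) = 9 * (log p / L) - log p := by ring
    linarith
  have hsmall : ∀ p ∈ P, (p : ℝ) ^ (9 / L - 1) ≤ 3 / 4 := fun p hp => by
    have hp10 : 9 - log p ≤ -1 := by linarith [(hP p hp).2.1]
    refine (hterm p hp).trans ((exp_le_exp.2 hp10).trans ?_)
    rw [exp_neg, inv_le_comm₀ (exp_pos 1) (by norm_num)]
    linarith [exp_one_gt_d9]
  have hsum : ∑ p ∈ P, (p : ℝ) ^ (9 / L - 1) ≤ 12 * exp 9 := by
    calc ∑ p ∈ P, (p : ℝ) ^ (9 / L - 1) ≤ ∑ p ∈ P, exp 9 * (1 / p) := by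
          refine sum_le_sum fun p hp => (hterm p hp).trans_eq ?_
          rw [exp_sub, exp_log (by exact_mod_cast (hP p hp).1.pos), mul_one_div]
      _ ≤ exp 9 * 12 := by
          rw [← mul_sum]
          refine mul_le_mul_of_nonneg_left ?_ (exp_pos 9).le
          refine sum_one_div_primes_le_of_log_mem_Ioc (μ := L / 2) (by linarith) fun p hp => ?_
          obtain ⟨hp, h1, h2⟩ := hP p hp
          exact ⟨hp, h1, by linarith⟩
      _ = 12 * exp 9 := mul_comm _ _
  calc ∑ b ∈ S, (1 : ℝ) / b ≤ T ^ (-(9 / L)) * ∏ p ∈ P, (1 - (p : ℝ) ^ (9 / L - 1))⁻¹ :=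
        sum_one_div_le_rpow_neg_mul_prod (by positivity) hT
          (fun p hp => (hsmall p hp).trans_lt (by norm_num : (3 / 4 : ℝ) < 1)) hS hST
    _ ≤ T ^ (-(9 / L)) * exp (4 * ∑ p ∈ P, (p : ℝ) ^ (9 / L - 1)) := by
        gcongr
        exact prod_inv_one_sub_le_exp_sum fun p hp => ⟨by positivity, hsmall p hp⟩
    _ ≤ T ^ (-(9 / L)) * exp (48 * exp 9) :=
        mul_le_mul_of_nonneg_left (exp_le_exp.2 (by linarith)) (by positivity)

lemma sum_one_div_factoredNumbers_primesLE_le {N : ℕ} {T : ℝ} (hT : 0 < T) {S : Finset ℕ}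
    (hS : (S : Set ℕ) ⊆ Nat.factoredNumbers (Nat.primesLE N)) (hST : ∀ b ∈ S, T < b) :
    ∑ b ∈ S, (1 : ℝ) / b ≤
      T ^ (-(1 / 2 : ℝ)) * ∏ p ∈ Nat.primesLE N, (1 - (p : ℝ) ^ (-(1 / 2 : ℝ)))⁻¹ := by
  have h := sum_one_div_le_rpow_neg_mul_prod (δ := 1 / 2) (by norm_num) hT (P := Nat.primesLE N)
    (fun p hp => rpow_lt_one_of_one_lt_of_neg
      (by exact_mod_cast (Nat.mem_primesLE.1 hp).2.one_lt) (by norm_num)) hS hST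
  norm_num at h ⊢
  exact h

lemma exp_neg_mul_le_exp_neg_half_mul_pow {L : ℝ} (hL : 8 ≤ L) (j : ℕ) :
    exp (-(3 / 5 * (6 / 5) ^ j * L)) ≤ exp (-(L / 2)) * (1 / 2) ^ j := by
  have hbern : 1 + j * (1 / 5 : ℝ) ≤ (6 / 5) ^ j :=
    (one_add_mul_le_pow (by norm_num) j).trans_eq (by norm_num)
  have hj : (0 : ℝ) ≤ j := j.cast_nonneg
  calc exp (-(3 / 5 * (6 / 5) ^ j * L)) ≤ exp (-(L / 2) + j * -log 2) := by
        gcongr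
        nlinarith [log_two_lt_d9, mul_le_mul_of_nonneg_right hbern (by linarith : (0 : ℝ) ≤ L)]
    _ = exp (-(L / 2)) * (1 / 2) ^ j := by
        rw [exp_add, exp_nat_mul, ← log_inv, exp_log (by norm_num), one_div]

lemma exists_div_two_pow_le (m : ℝ) {c : ℝ} (hc : 0 < c) :
    ∃ J : ℕ, m / 2 ^ J ≤ c ∧ ∀ j < J, c < m / 2 ^ j := by
  have hex : ∃ J : ℕ, m / 2 ^ J ≤ c := by
    obtain ⟨J, hJ⟩ := pow_unbounded_of_one_lt (m / c) one_lt_two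
    exact ⟨J, by rw [div_le_iff₀ (by positivity)]; rw [div_lt_iff₀ hc] at hJ; linarith⟩
  exact ⟨Nat.find hex, Nat.find_spec hex, fun j hj => not_le.1 (Nat.find_min hex hj)⟩

/-- Primes `p ≤ w` are sorted into the bands `log w / 2 ^ (j + 1) < log p ≤ log w / 2 ^ j`,
`j < J`; band `J` collects all primes with `log p ≤ log w / 2 ^ J`. -/
noncomputable def bandIndex (w : ℝ) (J p : ℕ) : ℕ :=
  Nat.findGreatest (fun j => log p ≤ log w / 2 ^ j) J

noncomputable def bandPrimes (w : ℝ) (J j : ℕ) : Finset ℕ :=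
  {p ∈ Nat.primesLE ⌊w⌋₊ | bandIndex w J p = j}

/-- A divisor larger than `y ^ (1 / 2)` has, in some band `j`, a part larger than
`y ^ (bandWeight J j / 2)`, because these weights sum to at most `1`. -/
noncomputable def bandWeight (J j : ℕ) : ℝ := if j < J then 2 / 15 * (3 / 5) ^ j else 2 / 3

noncomputable def bandDivisors (y w : ℝ) (J j : ℕ) : Finset ℕ :=
  {b ∈ Icc 1 ⌊y⌋₊ | exp (bandWeight J j * log y / 2) < b ∧
    b ∈ Nat.factoredNumbers (bandPrimes w J j)}

lemma bandIndex_le (w : ℝ) (J p : ℕ) : bandIndex w J p ≤ J := Nat.findGreatest_le J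

lemma mem_bandPrimes {w : ℝ} {J j p : ℕ} :
    p ∈ bandPrimes w J j ↔ p.Prime ∧ (p : ℝ) ≤ w ∧ bandIndex w J p = j := by
  rw [bandPrimes, mem_filter, Nat.mem_primesLE]
  constructor
  · rintro ⟨⟨hpw, hp⟩, hj⟩
    exact ⟨hp, (Nat.le_floor_iff' hp.ne_zero).1 hpw, hj⟩
  · rintro ⟨hp, hpw, hj⟩
    exact ⟨⟨(Nat.le_floor_iff' hp.ne_zero).2 hpw, hp⟩, hj⟩

lemma log_le_of_mem_bandPrimes {w : ℝ} {J j p : ℕ} (hp : p ∈ bandPrimes w J j) :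
    log p ≤ log w / 2 ^ j := by
  obtain ⟨hprime, hpw, rfl⟩ := mem_bandPrimes.1 hp
  exact Nat.findGreatest_spec (P := fun j => log p ≤ log w / 2 ^ j) (Nat.zero_le J)
    (by simpa using log_le_log (by exact_mod_cast hprime.pos) hpw)

lemma lt_log_of_mem_bandPrimes {w : ℝ} {J j p : ℕ} (hp : p ∈ bandPrimes w J j) (hj : j < J) :
    log w / 2 ^ (j + 1) < log p := by
  obtain ⟨-, -, rfl⟩ := mem_bandPrimes.1 hp
  exact not_le.1 (Nat.findGreatest_is_greatest (Nat.lt_succ_self _) hj)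

lemma bandWeight_nonneg (J j : ℕ) : 0 ≤ bandWeight J j := by
  unfold bandWeight
  split_ifs <;> positivity

lemma bandWeight_le_one (J j : ℕ) : bandWeight J j ≤ 1 := by
  unfold bandWeight
  split_ifs
  · have : ((3 : ℝ) / 5) ^ j ≤ 1 := pow_le_one₀ (by norm_num) (by norm_num)
    linarith
  · norm_num

lemma sum_bandWeight_le_one (J : ℕ) : ∑ j ∈ range (J + 1), bandWeight J j ≤ 1 := by
  have hgeom := sum_pow_le_inv_one_sub (t := 3 / 5) (by norm_num) (by norm_num) (range J)
  have hlt : ∀ j ∈ range J, bandWeight J j = 2 / 15 * (3 / 5) ^ j :=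
    fun j hj => if_pos (mem_range.1 hj)
  have hlast : bandWeight J J = 2 / 3 := if_neg (lt_irrefl J)
  rw [sum_range_succ, sum_congr rfl hlt, ← mul_sum, hlast]
  norm_num at hgeom
  linarith

lemma exp_bandWeight_mul_le {y w : ℝ} (hy : 0 < y) (hw : 1 ≤ w) (hwy : 8 * log w ≤ log y)
    (J j : ℕ) : exp (bandWeight J j * log y / 2) * exp (log w / 2 ^ j) ≤ y := by
  have hlogw := log_nonneg hw
  have hj : log w / 2 ^ j ≤ log w := div_le_self hlogw (one_le_pow₀ (by norm_num))
  have hη : bandWeight J j * log y ≤ log y :=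
    mul_le_of_le_one_left (by linarith) (bandWeight_le_one J j)
  calc exp (bandWeight J j * log y / 2) * exp (log w / 2 ^ j) ≤ exp (log y) := by
        rw [← exp_add]
        gcongr
        linarith
    _ = y := exp_log hy

lemma exists_mem_bandDivisors_dvd {y w α : ℝ} (hy : 1 ≤ y) (hw : 1 ≤ w)
    (hwy : 8 * log w ≤ log y) (hα : 1 / 2 < α) (J : ℕ) {n d : ℕ} (hn : n ≠ 0) (hdn : d ∣ n)
    (hdy : y ^ α < d) (hdw : ∀ p : ℕ, p.Prime → p ∣ d → (p : ℝ) ≤ w) :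
    ∃ j ∈ range (J + 1), ∃ b ∈ bandDivisors y w J j, b ∣ n := by
  have hy0 : 0 < y := by linarith
  have hd : d ≠ 0 := ne_zero_of_dvd_ne_zero hn hdn
  have hprod : ∏ j ∈ range (J + 1), exp (bandWeight J j * log y / 2) < d := by
    calc ∏ j ∈ range (J + 1), exp (bandWeight J j * log y / 2)
        = exp ((∑ j ∈ range (J + 1), bandWeight J j) * log y / 2) := by
          rw [← exp_sum, sum_mul, sum_div]
      _ ≤ y ^ α := by
          rw [rpow_def_of_pos hy0]
          gcongr
          nlinarith [sum_bandWeight_le_one J, log_nonneg hy]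
      _ < d := hdy
  obtain ⟨j, hj, D, hDd, hTD, hDj⟩ := exists_dvd_lt_of_prod_lt (range (J + 1)) (bandIndex w J) hd
    (fun p _ => mem_range.2 (Nat.lt_succ_of_le (bandIndex_le w J p))) hprod
  have hDP : ∀ p ∈ D.primeFactors, p ∈ bandPrimes w J j := fun p hp => by
    have hpd := Nat.primeFactors_mono hDd hd hp
    exact mem_bandPrimes.2 ⟨Nat.prime_of_mem_primeFactors hp,
      hdw p (Nat.prime_of_mem_primeFactors hpd) (Nat.dvd_of_mem_primeFactors hpd), hDj p hp⟩
  have hT1 : 1 ≤ exp (bandWeight J j * log y / 2) :=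
    one_le_exp (by have := bandWeight_nonneg J j; have := log_nonneg hy; positivity)
  obtain ⟨b, hbD, hTb, hbT⟩ := exists_dvd_lt_le_mul (v := exp (log w / 2 ^ j)) hT1 hTD
    fun p hp => le_exp_of_log_le (log_le_of_mem_bandPrimes (hDP p hp))
  have hD0 : D ≠ 0 := by rintro rfl; simp at hTD; linarith
  refine ⟨j, hj, b, ?_, (hbD.trans hDd).trans hdn⟩
  rw [bandDivisors, mem_filter, mem_Icc]
  refine ⟨⟨?_, Nat.le_floor (hbT.trans (exp_bandWeight_mul_le hy0 hw hwy J j))⟩, hTb,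
    Nat.mem_factoredNumbers'.2 fun p hp hpb =>
      hDP p (Nat.mem_primeFactors.2 ⟨hp, hpb.trans hbD, hD0⟩)⟩
  exact_mod_cast hT1.trans hTb.le

lemma one_le_and_le_of_mem_bandDivisors {y w : ℝ} (hy : 0 ≤ y) {J j b : ℕ}
    (hb : b ∈ bandDivisors y w J j) : 1 ≤ b ∧ (b : ℝ) ≤ y := by
  rw [bandDivisors, mem_filter, mem_Icc] at hb
  exact ⟨hb.1.1, (Nat.le_floor_iff hy).1 hb.1.2⟩

lemma sum_one_div_bandDivisors_le_of_lt {y w : ℝ} (hw : 1 < w) (hwy : 8 * log w ≤ log y)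
    {J j : ℕ} (hj : j < J) (hJ : 20 < log w / 2 ^ j) :
    ∑ b ∈ bandDivisors y w J j, (1 : ℝ) / b ≤
      exp (48 * exp 9) * exp (-log y / (2 * log w)) * (1 / 2) ^ j := by
  have hlogw : 0 < log w := log_pos hw
  have hband : ∀ p ∈ bandPrimes w J j,
      p.Prime ∧ log p ∈ Set.Ioc (log w / 2 ^ j / 2) (log w / 2 ^ j) :=
    fun p hp => ⟨(mem_bandPrimes.1 hp).1, by
      rw [div_div, ← pow_succ]; exact lt_log_of_mem_bandPrimes hp hj, log_le_of_mem_bandPrimes hp⟩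
  have hexp : exp (bandWeight J j * log y / 2) ^ (-(9 / (log w / 2 ^ j))) =
      exp (-(3 / 5 * (6 / 5) ^ j * (log y / log w))) := by
    rw [← exp_mul, bandWeight, if_pos hj, show (6 / 5 : ℝ) ^ j = (3 / 5) ^ j * 2 ^ j by
      rw [← mul_pow]; norm_num]
    congr 1
    field_simp
    ring
  calc ∑ b ∈ bandDivisors y w J j, (1 : ℝ) / b
      ≤ exp (bandWeight J j * log y / 2) ^ (-(9 / (log w / 2 ^ j))) * exp (48 * exp 9) :=
        sum_one_div_factoredNumbers_le_of_log_mem_Ioc hJ.le (exp_pos _) hband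
          (fun b hb => (mem_filter.1 hb).2.2) fun b hb => (mem_filter.1 hb).2.1
    _ ≤ exp (-(log y / log w / 2)) * (1 / 2) ^ j * exp (48 * exp 9) := by
        rw [hexp]
        gcongr
        exact exp_neg_mul_le_exp_neg_half_mul_pow ((le_div_iff₀ hlogw).2 (by linarith)) j
    _ = exp (48 * exp 9) * exp (-log y / (2 * log w)) * (1 / 2) ^ j := by
        rw [show -(log y / log w / 2) = -log y / (2 * log w) by ring]
        ring

lemma sum_one_div_bandDivisors_self_le {y w : ℝ} (hy : 0 < y) {J : ℕ}
    (hJ : log w / 2 ^ J ≤ 20) :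
    ∑ b ∈ bandDivisors y w J J, (1 : ℝ) / b ≤
      (∏ p ∈ Nat.primesLE ⌊exp 20⌋₊, (1 - (p : ℝ) ^ (-(1 / 2 : ℝ)))⁻¹) * y ^ (-(1 : ℝ) / 6) := by
  have hP : bandPrimes w J J ⊆ Nat.primesLE ⌊exp 20⌋₊ := fun p hp => Nat.mem_primesLE.2
    ⟨Nat.le_floor (le_exp_of_log_le ((log_le_of_mem_bandPrimes hp).trans hJ)),
      (mem_bandPrimes.1 hp).1⟩
  have h := sum_one_div_factoredNumbers_primesLE_le (exp_pos _) (S := bandDivisors y w J J)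
    (fun b hb => Nat.factoredNumbers_mono hP (mem_filter.1 hb).2.2)
    fun b hb => (mem_filter.1 hb).2.1
  rw [← exp_mul, bandWeight, if_neg (lt_irrefl J)] at h
  rw [rpow_def_of_pos hy, mul_comm]
  convert h using 3
  ring

lemma sum_sum_one_div_bandDivisors_le {y w : ℝ} (hy : 0 < y) (hw : 1 < w)
    (hwy : 8 * log w ≤ log y) {J : ℕ} (hJ : log w / 2 ^ J ≤ 20)
    (hJ' : ∀ j < J, 20 < log w / 2 ^ j) :
    ∑ j ∈ range (J + 1), ∑ b ∈ bandDivisors y w J j, (1 : ℝ) / b ≤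
      2 * exp (48 * exp 9) * exp (-log y / (2 * log w)) +
      (∏ p ∈ Nat.primesLE ⌊exp 20⌋₊, (1 - (p : ℝ) ^ (-(1 / 2 : ℝ)))⁻¹) * y ^ (-(1 : ℝ) / 6) := by
  rw [sum_range_succ]
  refine add_le_add ?_ (sum_one_div_bandDivisors_self_le hy hJ)
  calc ∑ j ∈ range J, ∑ b ∈ bandDivisors y w J j, (1 : ℝ) / b
      ≤ ∑ j ∈ range J, exp (48 * exp 9) * exp (-log y / (2 * log w)) * (1 / 2) ^ j :=
        sum_le_sum fun j hj =>
          sum_one_div_bandDivisors_le_of_lt hw hwy (mem_range.1 hj) (hJ' j (mem_range.1 hj))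
    _ = exp (48 * exp 9) * exp (-log y / (2 * log w)) * ∑ j ∈ range J, (1 / 2 : ℝ) ^ j :=
        (mul_sum _ _ _).symm
    _ ≤ exp (48 * exp 9) * exp (-log y / (2 * log w)) * 2 := by
        gcongr
        exact sum_geometric_two_le J
    _ = 2 * exp (48 * exp 9) * exp (-log y / (2 * log w)) := by ring

theorem stmt3 :
    ∃ C : ℝ, 0 < C ∧ ∀ α x y w : ℝ, 1 / 2 < α → 3 ≤ y → 0 ≤ x →
      2 ≤ w → w ≤ y ^ ((1 : ℝ) / 8) →
      (((Finset.Ioc ⌊x⌋₊ ⌊x + y⌋₊).filter (fun n =>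
          ∃ d : ℕ, d ∣ n ∧ y ^ α < (d : ℝ) ∧
            ∀ p : ℕ, p.Prime → p ∣ d → (p : ℝ) ≤ w)).card : ℝ)
        ≤ C * y * (Real.exp (-(Real.log y) / (2 * Real.log w)) + y ^ (-(1 : ℝ) / 6)) := by
  set K := ∏ p ∈ Nat.primesLE ⌊exp 20⌋₊, (1 - (p : ℝ) ^ (-(1 / 2 : ℝ)))⁻¹
  have hK : 0 < K := prod_pos fun p hp => inv_pos.2 (sub_pos.2 (rpow_lt_one_of_one_lt_of_neg
    (by exact_mod_cast (Nat.mem_primesLE.1 hp).2.one_lt) (by norm_num)))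
  refine ⟨3 * (2 * exp (48 * exp 9) + K), by positivity, ?_⟩
  intro α x y w hα hy hx hw hwy
  have hy0 : 0 < y := by linarith
  have hlog : 8 * log w ≤ log y := by
    have := log_le_log (by linarith) hwy
    rw [log_rpow hy0] at this
    linarith
  obtain ⟨J, hJ, hJ'⟩ := exists_div_two_pow_le (log w) (by norm_num : (0 : ℝ) < 20)
  have hE := exp_pos (-log y / (2 * log w))
  have hY := rpow_pos_of_pos hy0 (-(1 : ℝ) / 6)
  calc _ ≤ 3 * y * ∑ j ∈ range (J + 1), ∑ b ∈ bandDivisors y w J j, (1 : ℝ) / b := by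
        refine card_le_three_mul_sum_sum_one_div hx
          (fun j _ b hb => one_le_and_le_of_mem_bandDivisors hy0.le hb) (filter_subset _ _)
          fun n hn => ?_
        obtain ⟨hn, d, hdn, hdy, hdw⟩ := mem_filter.1 hn
        exact exists_mem_bandDivisors_dvd (by linarith) (by linarith) hlog hα J
          (by have := (mem_Ioc.1 hn).1; omega) hdn hdy hdw
    _ ≤ 3 * y * (2 * exp (48 * exp 9) * exp (-log y / (2 * log w)) + K * y ^ (-(1 : ℝ) / 6)) := by
        gcongr
        exact sum_sum_one_div_bandDivisors_le hy0 (by linarith) hlog hJ hJ'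
    _ ≤ _ := by
        have := exp_pos (48 * exp 9)
        nlinarith [mul_pos (mul_pos this hy0) hY, mul_pos (mul_pos hK hy0) hE]
end

section
/- There exists an absolute constant $C > 0$ such that the following holds. Let $z \ge 2$ be a real number, and let $e$ be a function assigning to each prime $p \le z^{1/2}$ an integer $e(p) \ge 2$ such that $p^{e(p)} > z^{1/2}$. Then $\sum_{p \le z^{1/2}} p^{-e(p)} \le C z^{-1/4}$, where the sum is over primes $p \le z^{1/2}$. -/
/-! Put `t = z^{1/4}`. A prime `p ≤ t` contributes less than `1/t²`, and there are at most `t`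
of them; a prime `p > t` contributes at most `1/p²` since `e(p) ≥ 2`, and `∑_{n > t} 1/n² ≤ 2/t`.
Hence the sum is at most `3/t = 3 z^{-1/4}`. -/

open Finset

lemma card_le_of_forall_pos_le {s : Finset ℕ} {t : ℝ} (ht : 0 ≤ t)
    (hs : ∀ n ∈ s, 0 < n ∧ (n : ℝ) ≤ t) : (#s : ℝ) ≤ t := by
  have hsub : s ⊆ Icc 1 ⌊t⌋₊ := fun n hn =>
    mem_Icc.2 ⟨(hs n hn).1, Nat.le_floor (hs n hn).2⟩
  calc (#s : ℝ) ≤ ⌊t⌋₊ := by simpa using card_le_card hsub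
    _ ≤ t := Nat.floor_le ht

lemma sum_inv_sq_le_two_div {s : Finset ℕ} {t : ℝ} (ht : 0 < t) (hs : ∀ n ∈ s, t < n) :
    ∑ n ∈ s, ((n : ℝ) ^ 2)⁻¹ ≤ 2 / t := by
  have hsub : s ⊆ Ioo ⌊t⌋₊ (s.sup id + 1) := fun n hn =>
    mem_Ioo.2 ⟨(Nat.floor_lt ht.le).2 (hs n hn), Nat.lt_succ_of_le (le_sup (f := id) hn)⟩
  calc ∑ n ∈ s, ((n : ℝ) ^ 2)⁻¹ ≤ ∑ n ∈ Ioo ⌊t⌋₊ (s.sup id + 1), ((n : ℝ) ^ 2)⁻¹ :=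
        sum_le_sum_of_subset_of_nonneg hsub fun _ _ _ => by positivity
    _ ≤ 2 / (⌊t⌋₊ + 1) := sum_Ioo_inv_sq_le _ _
    _ ≤ 2 / t := div_le_div_of_nonneg_left zero_le_two ht (Nat.lt_floor_add_one t).le

lemma sum_one_div_pow_le {s : Finset ℕ} {t : ℝ} (ht : 0 < t) (e : ℕ → ℕ)
    (hs : ∀ p ∈ s, 0 < p) (he : ∀ p ∈ s, 2 ≤ e p ∧ t ^ 2 < (p : ℝ) ^ e p) :
    ∑ p ∈ s, 1 / (p : ℝ) ^ e p ≤ 3 / t := by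
  rw [← sum_filter_add_sum_filter_not s (fun p : ℕ => (p : ℝ) ≤ t)]
  have hsmall : ∑ p ∈ s.filter (fun p : ℕ => (p : ℝ) ≤ t), 1 / (p : ℝ) ^ e p ≤ 1 / t :=
    calc ∑ p ∈ s.filter (fun p : ℕ => (p : ℝ) ≤ t), 1 / (p : ℝ) ^ e p
        ≤ ∑ p ∈ s.filter (fun p : ℕ => (p : ℝ) ≤ t), 1 / t ^ 2 := by
          refine sum_le_sum fun p hp => ?_
          exact one_div_le_one_div_of_le (by positivity) (he p (mem_filter.1 hp).1).2.le
      _ ≤ t * (1 / t ^ 2) := by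
          rw [sum_const, nsmul_eq_mul]
          refine mul_le_mul_of_nonneg_right (card_le_of_forall_pos_le ht.le fun p hp => ?_)
            (by positivity)
          rw [mem_filter] at hp
          exact ⟨hs p hp.1, hp.2⟩
      _ = 1 / t := by field_simp
  have hlarge : ∑ p ∈ s.filter (fun p : ℕ => ¬(p : ℝ) ≤ t), 1 / (p : ℝ) ^ e p ≤ 2 / t :=
    calc ∑ p ∈ s.filter (fun p : ℕ => ¬(p : ℝ) ≤ t), 1 / (p : ℝ) ^ e p
        ≤ ∑ p ∈ s.filter (fun p : ℕ => ¬(p : ℝ) ≤ t), ((p : ℝ) ^ 2)⁻¹ := by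
          refine sum_le_sum fun p hp => ?_
          have hp := (mem_filter.1 hp).1
          rw [one_div]
          exact inv_anti₀ (pow_pos (mod_cast hs p hp) 2) <|
            pow_le_pow_right₀ (mod_cast hs p hp) (he p hp).1
      _ ≤ 2 / t := sum_inv_sq_le_two_div ht fun p hp => not_le.1 (mem_filter.1 hp).2
  exact (add_le_add hsmall hlarge).trans_eq (by ring)

open scoped Classical

theorem stmt6 :
    ∃ C : ℝ, 0 < C ∧ ∀ z : ℝ, 2 ≤ z → ∀ e : ℕ → ℕ,
      (∀ p : ℕ, p.Prime → (p : ℝ) ≤ z ^ ((1 : ℝ) / 2) →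
        2 ≤ e p ∧ z ^ ((1 : ℝ) / 2) < (p : ℝ) ^ (e p)) →
      ∑ p ∈ (Finset.range (⌊z⌋₊ + 1)).filter
          (fun p : ℕ => p.Prime ∧ (p : ℝ) ≤ z ^ ((1 : ℝ) / 2)),
        ((1 : ℝ) / (p : ℝ) ^ (e p)) ≤ C * z ^ (-(1 : ℝ) / 4) := by
  refine ⟨3, by norm_num, fun z hz e he => ?_⟩
  have hz0 : 0 < z := by linarith
  have hsq : z ^ ((1 : ℝ) / 2) = (z ^ ((1 : ℝ) / 4)) ^ 2 := by
    rw [← Real.rpow_natCast, ← Real.rpow_mul hz0.le]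
    norm_num
  have hinv : z ^ (-(1 : ℝ) / 4) = 1 / z ^ ((1 : ℝ) / 4) := by
    rw [neg_div, Real.rpow_neg hz0.le, one_div]
    norm_num
  rw [hinv, ← mul_div_assoc, mul_one]
  refine sum_one_div_pow_le (by positivity) e (fun p hp => (mem_filter.1 hp).2.1.pos) ?_
  intro p hp
  obtain ⟨-, hprime, hle⟩ := mem_filter.1 hp
  rw [← hsq]
  exact he p hprime hle
end

section
/- Let $n'$ and $d'$ be positive integers with $\gcd(n', d') = 1$. Then $D := \gcd\left( n'^3 (n' + 4d'), \; 16 \, d'^3 (n' + d') \right)$ is of the form $2^{e_2} 3^{e_3}$ with integers $0 \le e_2 \le 4$ and $0 \le e_3 \le 1$; in particular, $D$ divides $48$. -/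
/-!
Since `gcd (n', d') = 1`, the cubes `n'³` and `d'³` contribute nothing to the common part, and
`gcd (n' + 4d', n' + d') = gcd (3d', n' + d') = gcd (3, n' + d')`, so the gcd of the two products
with the factor `16` removed divides `3`. Putting `16` back multiplies the bound by at most `16`.
-/

namespace Nat

theorem gcd_add_mul_self_dvd {m d : ℕ} (hmd : Coprime m d) (k : ℕ) : gcd (m + k * d) m ∣ k := by
  rw [gcd_comm, gcd_self_add_right, Coprime.gcd_mul_right_cancel_right k hmd.symm]
  exact gcd_dvd_right m k

theorem gcd_pow_mul_add_mul_pow_mul_add_dvd {n d : ℕ} (hnd : Coprime n d) (a b k : ℕ) :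
    gcd (n ^ a * (n + d + k * d)) (d ^ b * (n + d)) ∣ k := by
  have hsum : Coprime (n + d) d := coprime_add_self_left.mpr hnd
  have hn : Coprime (n ^ a) (d ^ b * (n + d)) :=
    (hnd.pow a b).mul_right ((coprime_self_add_right.mpr hnd).pow_left a)
  have hd : Coprime (d ^ b) (n + d + k * d) :=
    ((coprime_add_mul_right_left _ _ k).mpr hsum).pow_right b |>.symm
  rw [hn.gcd_mul_left_cancel, hd.gcd_mul_left_cancel_right]
  exact gcd_add_mul_self_dvd hsum k

theorem exists_eq_pow_mul_pow_of_dvd {p q a b D : ℕ} (hp : p.Prime) (hq : q.Prime)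
    (hD : D ∣ p ^ a * q ^ b) : ∃ i ≤ a, ∃ j ≤ b, D = p ^ i * q ^ j := by
  obtain ⟨y, z, hy, hz, rfl⟩ := dvd_mul.mp hD
  obtain ⟨i, hi, rfl⟩ := (dvd_prime_pow hp).mp hy
  obtain ⟨j, hj, rfl⟩ := (dvd_prime_pow hq).mp hz
  exact ⟨i, hi, j, hj, rfl⟩

end Nat

theorem stmt9_general (n' d' : ℕ) (h : Nat.gcd n' d' = 1) :
    ∃ e2 e3 : ℕ, e2 ≤ 4 ∧ e3 ≤ 1 ∧
      Nat.gcd (n' ^ 3 * (n' + 4 * d')) (16 * d' ^ 3 * (n' + d')) = 2 ^ e2 * 3 ^ e3 ∧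
      Nat.gcd (n' ^ 3 * (n' + 4 * d')) (16 * d' ^ 3 * (n' + d')) ∣ 48 := by
  set A := n' ^ 3 * (n' + 4 * d')
  have hgcd_dvd_three : Nat.gcd A (d' ^ 3 * (n' + d')) ∣ 3 := by
    have := Nat.gcd_pow_mul_add_mul_pow_mul_add_dvd h 3 3 3
    rwa [show n' + d' + 3 * d' = n' + 4 * d' by ring] at this
  have h48 : Nat.gcd A (16 * d' ^ 3 * (n' + d')) ∣ 2 ^ 4 * 3 ^ 1 := by
    rw [mul_assoc]
    exact (gcd_mul_dvd_mul_gcd A 16 _).trans (mul_dvd_mul (Nat.gcd_dvd_right A 16) hgcd_dvd_three)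
  obtain ⟨e2, he2, e3, he3, hD⟩ := Nat.exists_eq_pow_mul_pow_of_dvd Nat.prime_two Nat.prime_three h48
  exact ⟨e2, e3, he2, he3, hD, h48⟩

theorem stmt9 (n' d' : ℕ) (hn : 0 < n') (hd : 0 < d') (h : Nat.gcd n' d' = 1) :
    ∃ e2 e3 : ℕ, e2 ≤ 4 ∧ e3 ≤ 1 ∧
      Nat.gcd (n' ^ 3 * (n' + 4 * d')) (16 * d' ^ 3 * (n' + d')) = 2 ^ e2 * 3 ^ e3 ∧
      Nat.gcd (n' ^ 3 * (n' + 4 * d')) (16 * d' ^ 3 * (n' + d')) ∣ 48 :=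
  stmt9_general n' d' h
end

section
/- Assume the abc-conjecture: for every $\epsilon > 0$ there exists a constant $C_\epsilon > 0$ such that for all positive integers $a, b, c$ with $a + b = c$ and $\gcd(a, b) = 1$, one has $c \le C_\epsilon \, \kappa(abc)^{1+\epsilon}$. Let $k > 5/4$ be a real number. Then there exists a constant $X_k > 0$ such that for all real numbers $x, y$ with $x > X_k$ and $1 \le y \le x^{(4k-5)/(8k)}$, there do not exist integers $n$ and $d \ge 1$ such that all seven integers $n - 2d, n - d, n, n + d, n + 2d, n + 3d, n + 4d$ lie in the interval $(x, x + y]$ and are all $k$-powered. -/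
/-!
Write the progression as `g (w + j D)`, `j = 0, …, 6`, with `w` and `D` coprime. The identity
`w (w + 4D)³ + 16 D³ (w + 3D) = (w + 2D)³ (w + 6D)` is then an abc triple with `gcd ∣ 48`, whose
radical is at most `16 D` times the kernels of five of the terms; each of these is at most
`(2x)^(1/k)` because the terms are `k`-powered. As `c ≥ (w + 2D)⁴` and `g, D ≤ d < y ≤ x^θ` with
`θ = (4k - 5)/(8k)`, the abc conjecture gives `x⁴ ≪ x^(4θ + (θ + 5/k)(1 + ε))`, which fails for
large `x` because the exponent gap `4 - 5θ - 5/k = (12k - 15)/(8k)` is positive when `k > 5/4`.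
-/

open UniqueFactorizationMonoid Filter

lemma kappa_eq_radical (n : ℕ) : kappa n = radical n := Nat.radical_eq_prod_primeFactors.symm

lemma kappa_le_self {n : ℕ} (hn : n ≠ 0) : kappa n ≤ n :=
  kappa_eq_radical n ▸ Nat.radical_le_self_iff.2 hn

lemma kappa_le_of_dvd {m n : ℕ} (h : m ∣ n) (hn : n ≠ 0) : kappa m ≤ kappa n := by
  simp only [kappa_eq_radical]
  exact Nat.le_of_dvd (Nat.radical_pos n) (radical_dvd_radical h hn)

lemma kappa_mul_le (m n : ℕ) : kappa (m * n) ≤ kappa m * kappa n := by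
  simp only [kappa_eq_radical]
  exact Nat.le_of_dvd (Nat.mul_pos (Nat.radical_pos m) (Nat.radical_pos n)) radical_mul_dvd

lemma kappa_mul_mul_le (l m n : ℕ) : kappa (l * m * n) ≤ kappa l * kappa m * kappa n :=
  (kappa_mul_le _ _).trans (Nat.mul_le_mul_right _ (kappa_mul_le _ _))

lemma kappa_pow (n : ℕ) {e : ℕ} (he : e ≠ 0) : kappa (n ^ e) = kappa n := by
  simp only [kappa_eq_radical, radical_pow n he]

lemma kappa_le_rpow_inv {k : ℝ} (hk : 0 < k) {n : ℕ} (h : IsKPowered k n) :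
    (kappa n : ℝ) ≤ (n : ℝ) ^ k⁻¹ :=
  (Real.le_rpow_inv_iff_of_pos (by positivity) (by positivity) hk).2 h

lemma progression_identity (w D : ℕ) :
    w * (w + 4 * D) ^ 3 + 16 * D ^ 3 * (w + 3 * D) = (w + 2 * D) ^ 3 * (w + 6 * D) := by
  ring

lemma gcd_progression_triple_dvd {w D : ℕ} (h : w.Coprime D) :
    Nat.gcd (w * (w + 4 * D) ^ 3) (16 * D ^ 3 * (w + 3 * D)) ∣ 48 := by
  set a := w * (w + 4 * D) ^ 3
  have haD : a.Coprime (D ^ 3) :=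
    (h.mul_left (((Nat.coprime_add_mul_right_left w D 4).2 h).pow_left 3)).pow_right 3
  have h43 : (w + 4 * D).Coprime (w + 3 * D) := by
    rw [show w + 4 * D = w + 3 * D + D by ring, Nat.coprime_self_add_left]
    exact ((Nat.coprime_add_mul_right_left w D 3).2 h).symm
  have h3 : a.gcd (w + 3 * D) ∣ 3 := by
    rw [Nat.Coprime.gcd_mul_right_cancel w (h43.pow_left 3), Nat.gcd_self_add_right, h.symm.gcd_mul_right_cancel_right]
    exact Nat.gcd_dvd_right w 3
  calc Nat.gcd a (16 * D ^ 3 * (w + 3 * D))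
      = Nat.gcd a (16 * (w + 3 * D)) := by
        rw [show 16 * D ^ 3 * (w + 3 * D) = 16 * (w + 3 * D) * D ^ 3 by ring]
        exact haD.symm.gcd_mul_right_cancel_right _
    _ ∣ Nat.gcd a 16 * Nat.gcd a (w + 3 * D) := gcd_mul_dvd_mul_gcd _ _ _
    _ ∣ 16 * 3 := Nat.mul_dvd_mul (Nat.gcd_dvd_right _ _) h3

lemma kappa_progression_triple_le (w : ℕ) {D : ℕ} (hD : D ≠ 0) :
    kappa (w * (w + 4 * D) ^ 3 * (16 * D ^ 3 * (w + 3 * D)) * ((w + 2 * D) ^ 3 * (w + 6 * D))) ≤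
      16 * D * (kappa w * kappa (w + 2 * D) * kappa (w + 3 * D) * kappa (w + 4 * D) *
        kappa (w + 6 * D)) := by
  have hA : kappa (w * (w + 4 * D) ^ 3) ≤ kappa w * kappa (w + 4 * D) :=
    (kappa_mul_le _ _).trans_eq (by rw [kappa_pow _ three_ne_zero])
  have hB : kappa (16 * D ^ 3 * (w + 3 * D)) ≤ 16 * D * kappa (w + 3 * D) := by
    refine (kappa_mul_mul_le _ _ _).trans ?_
    rw [kappa_pow _ three_ne_zero]
    gcongr
    exacts [kappa_le_self (by norm_num), kappa_le_self hD]
  have hC : kappa ((w + 2 * D) ^ 3 * (w + 6 * D)) ≤ kappa (w + 2 * D) * kappa (w + 6 * D) :=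
    (kappa_mul_le _ _).trans_eq (by rw [kappa_pow _ three_ne_zero])
  calc _ ≤ _ := kappa_mul_mul_le _ _ _
    _ ≤ kappa w * kappa (w + 4 * D) * (16 * D * kappa (w + 3 * D)) *
        (kappa (w + 2 * D) * kappa (w + 6 * D)) := by gcongr
    _ = _ := by ring

def ABCInequality (ε C : ℝ) : Prop :=
  ∀ a b c : ℕ, 0 < a → 0 < b → 0 < c → a + b = c → Nat.gcd a b = 1 →
    (c : ℝ) ≤ C * (kappa (a * b * c) : ℝ) ^ (1 + ε)

namespace ABCInequality

variable {ε C : ℝ}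

lemma le_gcd_mul (h : ABCInequality ε C) (hε : 0 ≤ 1 + ε) (hC : 0 ≤ C) {a b c : ℕ}
    (ha : 0 < a) (hb : 0 < b) (habc : a + b = c) :
    (c : ℝ) ≤ Nat.gcd a b * (C * (kappa (a * b * c) : ℝ) ^ (1 + ε)) := by
  obtain ⟨a', b', hcop, ha', hb'⟩ := Nat.exists_coprime a b
  generalize a.gcd b = g at *
  subst ha' hb' habc
  have hg : 0 < g := Nat.pos_of_mul_pos_left ha
  have hkappa : kappa (a' * b' * (a' + b')) ≤ kappa (a' * g * (b' * g) * (a' * g + b' * g)) :=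
    kappa_le_of_dvd ⟨g ^ 3, by ring⟩ (by positivity)
  have ha' : 0 < a' := Nat.pos_of_mul_pos_right ha
  have habc' := h a' b' (a' + b') ha' (Nat.pos_of_mul_pos_right hb) (by omega) rfl hcop
  calc ((a' * g + b' * g : ℕ) : ℝ) = g * (a' + b' : ℕ) := by push_cast; ring
    _ ≤ g * (C * (kappa (a' * g * (b' * g) * (a' * g + b' * g)) : ℝ) ^ (1 + ε)) := by
      gcongr
      exact habc'.trans (by gcongr)

lemma pow_four_le_of_coprime (h : ABCInequality ε C) (hε : 0 ≤ 1 + ε) (hC : 0 ≤ C) {w D : ℕ}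
    (hw : 0 < w) (hD : 0 < D) (hwD : w.Coprime D) {R : ℝ}
    (hR : ∀ j ∈ ({0, 2, 3, 4, 6} : Finset ℕ), (kappa (w + j * D) : ℝ) ≤ R) :
    ((w + 2 * D : ℕ) : ℝ) ^ 4 ≤ 48 * C * (16 * D * R ^ 5) ^ (1 + ε) := by
  have hκ : (kappa (w * (w + 4 * D) ^ 3 * (16 * D ^ 3 * (w + 3 * D)) *
      ((w + 2 * D) ^ 3 * (w + 6 * D))) : ℝ) ≤ 16 * D * R ^ 5 := by
    have hR0 : 0 ≤ R := (Nat.cast_nonneg _).trans (hR 0 (by simp))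
    have h0 : (kappa w : ℝ) ≤ R := by simpa using hR 0 (by simp)
    calc _ ≤ ((16 * D * (kappa w * kappa (w + 2 * D) * kappa (w + 3 * D) * kappa (w + 4 * D) *
          kappa (w + 6 * D)) : ℕ) : ℝ) := by exact_mod_cast kappa_progression_triple_le w hD.ne'
      _ ≤ 16 * D * (R * R * R * R * R) := by
          push_cast
          gcongr
          exacts [hR 2 (by simp), hR 3 (by simp), hR 4 (by simp), hR 6 (by simp)]
      _ = 16 * D * R ^ 5 := by ring
  have habc := h.le_gcd_mul hε hC (a := w * (w + 4 * D) ^ 3) (b := 16 * D ^ 3 * (w + 3 * D))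
    (by positivity) (by positivity) (progression_identity w D)
  have hc : (w + 2 * D) ^ 4 ≤ (w + 2 * D) ^ 3 * (w + 6 * D) := by
    rw [pow_succ]; gcongr; omega
  calc ((w + 2 * D : ℕ) : ℝ) ^ 4 ≤ (((w + 2 * D) ^ 3 * (w + 6 * D) : ℕ) : ℝ) := by
        exact_mod_cast hc
    _ ≤ 48 * (C * (16 * D * R ^ 5) ^ (1 + ε)) := by
        refine habc.trans ?_
        gcongr
        exact_mod_cast Nat.le_of_dvd (by norm_num) (gcd_progression_triple_dvd hwD)
    _ = 48 * C * (16 * D * R ^ 5) ^ (1 + ε) := by ring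

lemma pow_four_le (h : ABCInequality ε C) (hε : 0 ≤ 1 + ε) (hC : 0 ≤ C) {a e : ℕ}
    (ha : 0 < a) (he : 0 < e) {R : ℝ}
    (hR : ∀ j ∈ ({0, 2, 3, 4, 6} : Finset ℕ), (kappa (a + j * e) : ℝ) ≤ R) :
    ((a + 2 * e : ℕ) : ℝ) ^ 4 ≤ 48 * C * e ^ 4 * (16 * e * R ^ 5) ^ (1 + ε) := by
  obtain ⟨w, D, hwD, ha', he'⟩ := Nat.exists_coprime a e
  generalize a.gcd e = g at *
  subst ha' he'
  have hg : (1 : ℝ) ≤ g := by exact_mod_cast Nat.pos_of_mul_pos_left he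
  have hD : (1 : ℝ) ≤ D := by exact_mod_cast Nat.pos_of_mul_pos_right he
  have hκ : ∀ j ∈ ({0, 2, 3, 4, 6} : Finset ℕ), (kappa (w + j * D) : ℝ) ≤ R := fun j hj =>
    le_trans (Nat.cast_le.2 (kappa_le_of_dvd ⟨g, by ring⟩ (by positivity))) (hR j hj)
  have hR0 : 0 ≤ R := (Nat.cast_nonneg _).trans (hR 0 (by simp))
  have hmain := h.pow_four_le_of_coprime hε hC (Nat.pos_of_mul_pos_right ha)
    (Nat.pos_of_mul_pos_right he) hwD hκ
  calc ((w * g + 2 * (D * g) : ℕ) : ℝ) ^ 4 = g ^ 4 * ((w + 2 * D : ℕ) : ℝ) ^ 4 := by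
        push_cast; ring
    _ ≤ g ^ 4 * (48 * C * (16 * D * R ^ 5) ^ (1 + ε)) := by gcongr
    _ = 48 * C * g ^ 4 * (16 * D * R ^ 5) ^ (1 + ε) := by ring
    _ ≤ 48 * C * ((D * g : ℕ) : ℝ) ^ 4 * (16 * (D * g : ℕ) * R ^ 5) ^ (1 + ε) := by
        have hgDg : (g : ℝ) ≤ D * g := le_mul_of_one_le_left (by positivity) hD
        have hDDg : (D : ℝ) ≤ D * g := le_mul_of_one_le_right (by positivity) hg
        push_cast
        gcongr

end ABCInequality

lemma eventually_const_mul_rpow_lt_pow {K p : ℝ} {r : ℕ} (h : p < r) :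
    ∀ᶠ x : ℝ in atTop, K * x ^ p < x ^ r := by
  filter_upwards [(tendsto_rpow_atTop (sub_pos.2 h)).eventually_gt_atTop K,
    eventually_gt_atTop 0] with x hK hx
  rw [← Real.rpow_natCast, ← sub_add_cancel (r : ℝ) p, Real.rpow_add hx]
  exact mul_lt_mul_of_pos_right hK (Real.rpow_pos_of_pos hx p)

lemma eventually_progression_bound_lt (C : ℝ) {θ k q : ℝ}
    (h : (θ + 5 / k) * q < 4 - 4 * θ) :
    ∀ᶠ x : ℝ in atTop, 48 * C * (x ^ θ) ^ 4 * (16 * x ^ θ * ((2 * x) ^ k⁻¹) ^ 5) ^ q < x ^ 4 := by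
  filter_upwards [eventually_const_mul_rpow_lt_pow (K := 48 * C * (16 * 2 ^ (5 / k)) ^ q)
      (p := 4 * θ + (θ + 5 / k) * q) (r := 4) (by push_cast; linarith),
    eventually_gt_atTop 0] with x hlt hx
  convert hlt using 1
  have h2x : ((2 * x) ^ k⁻¹) ^ 5 = 2 ^ (5 / k) * x ^ (5 / k) := by
    rw [← Real.rpow_natCast, ← Real.rpow_mul (by positivity), Real.mul_rpow (by norm_num) hx.le]
    ring_nf
  rw [h2x, show 16 * x ^ θ * (2 ^ (5 / k) * x ^ (5 / k)) = 16 * 2 ^ (5 / k) * x ^ (θ + 5 / k) by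
      rw [Real.rpow_add hx]; ring,
    Real.mul_rpow (by positivity) (by positivity), ← Real.rpow_mul hx.le, ← Real.rpow_natCast,
    ← Real.rpow_mul hx.le, Real.rpow_add hx]
  push_cast
  ring_nf

lemma exists_pos_mul_one_add_lt {s t : ℝ} (hs : 0 < s) (h : s < t) : ∃ ε > 0, s * (1 + ε) < t := by
  refine ⟨(t - s) / (2 * s), by positivity, ?_⟩
  have : s * (1 + (t - s) / (2 * s)) = (s + t) / 2 := by field_simp; ring
  linarith

lemma exponent_gap {k : ℝ} (hk : 5 / 4 < k) :
    (4 * k - 5) / (8 * k) + 5 / k < 4 - 4 * ((4 * k - 5) / (8 * k)) := by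
  have hδ : 4 - 4 * ((4 * k - 5) / (8 * k)) - ((4 * k - 5) / (8 * k) + 5 / k) =
      (12 * k - 15) / (8 * k) := by
    field_simp; ring
  linarith [div_pos (by linarith : 0 < 12 * k - 15) (by linarith : 0 < 8 * k)]

lemma exists_nat_of_forall_mem_progression {n d : ℤ} (hd : 1 ≤ d) (h0 : 0 ≤ n - 2 * d)
    {P : ℤ → Prop}
    (h : ∀ m ∈ ([n - 2 * d, n - d, n, n + d, n + 2 * d, n + 3 * d, n + 4 * d] : List ℤ), P m) :
    ∃ a e : ℕ, 0 < e ∧ ∀ j ≤ 6, P (a + j * e : ℕ) := by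
  obtain ⟨a, ha⟩ := Int.eq_ofNat_of_zero_le h0
  obtain ⟨e, he⟩ := Int.eq_ofNat_of_zero_le (by omega : 0 ≤ d)
  refine ⟨a, e, by omega, fun j hj => h _ ?_⟩
  interval_cases j <;> simp <;> omega

theorem stmt10
    (habc : ∀ ε : ℝ, 0 < ε → ∃ Cε : ℝ, 0 < Cε ∧ ∀ a b c : ℕ, 0 < a → 0 < b → 0 < c →
      a + b = c → Nat.gcd a b = 1 →
      (c : ℝ) ≤ Cε * (kappa (a * b * c) : ℝ) ^ (1 + ε))
    (k : ℝ) (hk : 5 / 4 < k) :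
    ∃ X : ℝ, 0 < X ∧ ∀ x y : ℝ, X < x → 1 ≤ y → y ≤ x ^ ((4 * k - 5) / (8 * k)) →
      ¬ ∃ n d : ℤ, 1 ≤ d ∧
        ∀ m ∈ ([n - 2 * d, n - d, n, n + d, n + 2 * d, n + 3 * d, n + 4 * d] : List ℤ),
          x < (m : ℝ) ∧ (m : ℝ) ≤ x + y ∧ IsKPowered k m.toNat := by
  have hk0 : 0 < k := by linarith
  set θ := (4 * k - 5) / (8 * k)
  have hθ0 : 0 ≤ θ := div_nonneg (by linarith) (by positivity)
  have hθ1 : θ ≤ 1 := (div_le_one (by positivity)).2 (by linarith)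
  obtain ⟨ε, hε, hgap⟩ := exists_pos_mul_one_add_lt (by positivity) (exponent_gap hk)
  obtain ⟨C, hC, hABC⟩ : ∃ C, 0 < C ∧ ABCInequality ε C := habc ε hε
  obtain ⟨X, hX⟩ := eventually_atTop.1
    ((eventually_progression_bound_lt C hgap).and (eventually_ge_atTop 1))
  refine ⟨max X 1, by positivity, fun x y hx _ hyθ ⟨n, d, hd, hmem⟩ => ?_⟩
  obtain ⟨hlt, hx1⟩ := hX x (le_of_max_le_left hx.le)
  have hy : y ≤ x := hyθ.trans (Real.rpow_le_self_of_one_le hx1 hθ1)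
  have hpos : (0 : ℝ) ≤ (n - 2 * d : ℤ) := by linarith [(hmem (n - 2 * d) (by simp)).1]
  obtain ⟨a, e, he, hterm⟩ := exists_nat_of_forall_mem_progression hd (by exact_mod_cast hpos) hmem
  simp only [Int.cast_natCast, Int.toNat_natCast] at hterm
  have hlo : x < a := by simpa using (hterm 0 (by norm_num)).1
  have hhi := (hterm 6 (by norm_num)).2.1
  have hR : ∀ j ∈ ({0, 2, 3, 4, 6} : Finset ℕ), (kappa (a + j * e) : ℝ) ≤ (2 * x) ^ k⁻¹ := by
    intro j hj
    obtain ⟨-, hle, hpow⟩ := hterm j (by simp at hj; omega)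
    exact (kappa_le_rpow_inv hk0 hpow).trans (by gcongr; linarith)
  refine hlt.not_ge ?_
  calc x ^ 4 ≤ ((a + 2 * e : ℕ) : ℝ) ^ 4 := by
        gcongr; push_cast; linarith
    _ ≤ 48 * C * e ^ 4 * (16 * e * ((2 * x) ^ k⁻¹) ^ 5) ^ (1 + ε) :=
        hABC.pow_four_le (by linarith) hC.le (by exact_mod_cast (zero_lt_one.trans_le hx1).trans hlo)
          he hR
    _ ≤ 48 * C * (x ^ θ) ^ 4 * (16 * x ^ θ * ((2 * x) ^ k⁻¹) ^ 5) ^ (1 + ε) := by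
        have he' : (e : ℝ) ≤ x ^ θ := by push_cast at hhi; linarith
        gcongr
end

section
/- Let $0 < \alpha \le 1/2$ and let $y \ge 3$ and $w$ be real numbers with $2 \le w \le y^{\alpha/4}$. Suppose $n$ is a positive integer that has a divisor $d$ with $d > y^{\alpha}$ and $d$ being $w$-smooth. Then there exist a prime $p \le w$ and positive integers $a, b$ such that $n = a \cdot p \cdot b$, $y^{\alpha/2} < a \le y^{\alpha}/p$, every prime factor of $a$ is at most $p$, and every prime factor of $b$ is at least $p$. -/
/-!
List the prime factors of `n` in increasing order and let `a` be the shortest prefix product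
exceeding `A = y ^ (α / 2)`. Removing its last prime gives a product `≤ A`, so `a ≤ A * w` as long
as that prime is at most `w`; and the next prime `p` exists and is at most `w`, because otherwise
the `w`-smooth divisor `d` would divide `a`, whereas `d > y ^ α ≥ A * w`. Then
`a * p ≤ A * w ^ 2 ≤ y ^ α`, and sortedness splits the prime factors of `n = a * p * b` as required.
-/

namespace List

variable {α : Type*} [Preorder α] {l : List α} {j : ℕ} {x : α}

theorem SortedLE.le_getElem_of_mem_take (hl : l.SortedLE) (hj : j < l.length)
    (hx : x ∈ l.take j) : x ≤ l[j] := by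
  have hpw := hl.pairwise
  rw [← take_append_drop j l, pairwise_append] at hpw
  exact hpw.2.2 x hx l[j] (by rw [drop_eq_getElem_cons hj]; exact mem_cons_self)

theorem SortedLE.getElem_le_of_mem_drop (hl : l.SortedLE) (hj : j < l.length)
    (hx : x ∈ l.drop j) : l[j] ≤ x := by
  have hpw := hl.pairwise.sublist (drop_sublist j l)
  rw [drop_eq_getElem_cons hj, pairwise_cons] at hpw
  rw [drop_eq_getElem_cons hj, mem_cons] at hx
  rcases hx with rfl | hx
  exacts [le_rfl, hpw.1 x hx]

theorem prod_eq_prod_take_mul_getElem_mul_prod_drop {M : Type*} [Monoid M] (l : List M)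
    (hj : j < l.length) : l.prod = (l.take j).prod * l[j] * (l.drop (j + 1)).prod := by
  rw [← prod_take_mul_prod_drop l j, drop_eq_getElem_cons hj, prod_cons, mul_assoc]

end List

namespace Nat

variable {n j q : ℕ}

theorem le_getElem_primeFactorsList_of_dvd_prod_take (hj : j < n.primeFactorsList.length)
    (hq : q.Prime) (hqa : q ∣ (n.primeFactorsList.take j).prod) : q ≤ n.primeFactorsList[j] :=
  (primeFactorsList_sorted n).le_getElem_of_mem_take hj <| mem_list_primes_of_dvd_prod hq.prime
    (fun _ hp => (prime_of_mem_primeFactorsList (List.mem_of_mem_take hp)).prime) hqa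

theorem getElem_primeFactorsList_le_of_dvd_prod_drop (hj : j < n.primeFactorsList.length)
    (hq : q.Prime) (hqb : q ∣ (n.primeFactorsList.drop (j + 1)).prod) :
    n.primeFactorsList[j] ≤ q := by
  refine (primeFactorsList_sorted n).getElem_le_of_mem_drop hj ?_
  rw [List.drop_eq_getElem_cons hj]
  exact List.mem_cons_of_mem _ <| mem_list_primes_of_dvd_prod hq.prime
    (fun _ hp => (prime_of_mem_primeFactorsList (List.mem_of_mem_drop hp)).prime) hqb

theorem prod_take_primeFactorsList_pos (n j : ℕ) : 0 < (n.primeFactorsList.take j).prod :=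
  List.prod_pos fun _ hp => (prime_of_mem_primeFactorsList (List.mem_of_mem_take hp)).pos

theorem prod_drop_primeFactorsList_pos (n j : ℕ) : 0 < (n.primeFactorsList.drop j).prod :=
  List.prod_pos fun _ hp => (prime_of_mem_primeFactorsList (List.mem_of_mem_drop hp)).pos

variable {d : ℕ} {w : ℝ}

theorem exists_getElem_primeFactorsList_le_of_prod_take_lt {i : ℕ} (hn : n ≠ 0) (hdn : d ∣ n)
    (hd : ∀ p : ℕ, p.Prime → p ∣ d → (p : ℝ) ≤ w) (hi : (n.primeFactorsList.take i).prod < d) :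
    ∃ h : i < n.primeFactorsList.length, (n.primeFactorsList[i] : ℝ) ≤ w := by
  set L := n.primeFactorsList
  -- Otherwise all primes of `n` from position `i` on exceed `w`, so `d` divides the first `i`.
  by_contra! hbig
  have hdrop : ∀ q ∈ L.drop i, w < q := by
    intro q hq
    have hiL : i < L.length := by
      by_contra h
      simp [List.drop_eq_nil_of_le (not_lt.1 h)] at hq
    exact (hbig hiL).trans_le <| by
      exact_mod_cast (primeFactorsList_sorted n).getElem_le_of_mem_drop hiL hq
  have hcop : d.Coprime (L.drop i).prod := coprime_list_prod_right_iff.2 fun q hq => by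
    have hqp := prime_of_mem_primeFactorsList (List.mem_of_mem_drop hq)
    exact coprime_comm.1 <| hqp.coprime_iff_not_dvd.2 fun hqd => (hdrop q hq).not_ge (hd q hqp hqd)
  have hdvd : d ∣ (L.take i).prod :=
    hcop.dvd_of_dvd_mul_right (by rwa [List.prod_take_mul_prod_drop, prod_primeFactorsList hn])
  exact hi.not_ge (le_of_dvd (prod_take_primeFactorsList_pos n i) hdvd)

theorem exists_prod_take_primeFactorsList_mem_Ioc {A : ℝ} (hn : n ≠ 0) (hdn : d ∣ n)
    (hd : ∀ p : ℕ, p.Prime → p ∣ d → (p : ℝ) ≤ w) (hA : 1 ≤ A) (hw : 1 ≤ w) (hAd : A * w < d) :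
    ∃ j, ∃ hj : j < n.primeFactorsList.length, (n.primeFactorsList[j] : ℝ) ≤ w ∧
      A < (n.primeFactorsList.take j).prod ∧ ((n.primeFactorsList.take j).prod : ℝ) ≤ A * w := by
  set L := n.primeFactorsList
  have hA_lt_d : A < d := (le_mul_of_one_le_right (by linarith) hw).trans_lt hAd
  have hex : ∃ j, A < (L.take j).prod := by
    refine ⟨L.length, ?_⟩
    rw [List.take_length, prod_primeFactorsList hn]
    exact hA_lt_d.trans_le (by exact_mod_cast le_of_dvd (pos_of_ne_zero hn) hdn)
  obtain ⟨i, hi⟩ : ∃ i, Nat.find hex = i + 1 := by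
    refine exists_eq_succ_of_ne_zero fun h => ?_
    have := Nat.find_spec hex
    rw [h, List.take_zero, List.prod_nil, cast_one] at this
    linarith
  have hPi : ((L.take i).prod : ℝ) ≤ A := not_lt.1 (Nat.find_min hex (by omega))
  obtain ⟨hiL, hLi⟩ := exists_getElem_primeFactorsList_le_of_prod_take_lt hn hdn hd
    (by exact_mod_cast hPi.trans_lt hA_lt_d)
  have hPsucc : ((L.take (i + 1)).prod : ℝ) ≤ A * w := by
    rw [List.prod_take_succ _ _ hiL, cast_mul]
    exact mul_le_mul hPi hLi (cast_nonneg _) (by linarith)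
  obtain ⟨hjL, hLj⟩ := exists_getElem_primeFactorsList_le_of_prod_take_lt hn hdn hd
    (by exact_mod_cast hPsucc.trans_lt hAd)
  exact ⟨i + 1, hjL, hLj, hi ▸ Nat.find_spec hex, hPsucc⟩

end Nat

theorem stmt11_general (α y w : ℝ) (hα0 : 0 < α) (hy : 3 ≤ y)
    (hw2 : 2 ≤ w) (hw : w ≤ y ^ (α / 4)) (n : ℕ) (hn : 0 < n)
    (hd : ∃ d : ℕ, d ∣ n ∧ y ^ α < (d : ℝ) ∧
      ∀ p : ℕ, p.Prime → p ∣ d → (p : ℝ) ≤ w) :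
    ∃ p a b : ℕ, p.Prime ∧ (p : ℝ) ≤ w ∧ 0 < a ∧ 0 < b ∧ n = a * p * b ∧
      y ^ (α / 2) < (a : ℝ) ∧ (a : ℝ) ≤ y ^ α / (p : ℝ) ∧
      (∀ q : ℕ, q.Prime → q ∣ a → q ≤ p) ∧
      (∀ q : ℕ, q.Prime → q ∣ b → p ≤ q) := by
  obtain ⟨d, hdn, hyd, hd⟩ := hd
  have hA : 1 ≤ y ^ (α / 2) := Real.one_le_rpow (by linarith) (by linarith)
  have hAww : y ^ (α / 2) * w * w ≤ y ^ α := calc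
    y ^ (α / 2) * w * w ≤ y ^ (α / 2) * y ^ (α / 4) * y ^ (α / 4) := by gcongr
    _ = y ^ α := by rw [← Real.rpow_add (by linarith), ← Real.rpow_add (by linarith)]; ring_nf
  have hAw : y ^ (α / 2) * w ≤ y ^ α :=
    (le_mul_of_one_le_right (by positivity) (by linarith)).trans hAww
  obtain ⟨j, hj, hpw, haA, haAw⟩ := Nat.exists_prod_take_primeFactorsList_mem_Ioc hn.ne' hdn hd hA
    (by linarith) (hAw.trans_lt hyd)
  have hp := Nat.prime_of_mem_primeFactorsList (List.getElem_mem hj)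
  refine ⟨_, _, _, hp, hpw, Nat.prod_take_primeFactorsList_pos n j,
    Nat.prod_drop_primeFactorsList_pos n (j + 1), ?_, haA, ?_,
    fun q hq => Nat.le_getElem_primeFactorsList_of_dvd_prod_take hj hq,
    fun q hq => Nat.getElem_primeFactorsList_le_of_dvd_prod_drop hj hq⟩
  · rw [← List.prod_eq_prod_take_mul_getElem_mul_prod_drop _ hj, Nat.prod_primeFactorsList hn.ne']
  · rw [le_div_iff₀ (by exact_mod_cast hp.pos)]
    exact (mul_le_mul haAw hpw (Nat.cast_nonneg _) (by positivity)).trans hAww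

theorem stmt11 (α y w : ℝ) (hα0 : 0 < α) (hα : α ≤ 1 / 2) (hy : 3 ≤ y)
    (hw2 : 2 ≤ w) (hw : w ≤ y ^ (α / 4)) (n : ℕ) (hn : 0 < n)
    (hd : ∃ d : ℕ, d ∣ n ∧ y ^ α < (d : ℝ) ∧
      ∀ p : ℕ, p.Prime → p ∣ d → (p : ℝ) ≤ w) :
    ∃ p a b : ℕ, p.Prime ∧ (p : ℝ) ≤ w ∧ 0 < a ∧ 0 < b ∧ n = a * p * b ∧
      y ^ (α / 2) < (a : ℝ) ∧ (a : ℝ) ≤ y ^ α / (p : ℝ) ∧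
      (∀ q : ℕ, q.Prime → q ∣ a → q ≤ p) ∧
      (∀ q : ℕ, q.Prime → q ∣ b → p ≤ q) :=
  stmt11_general α y w hα0 hy hw2 hw n hn hd
end

section
/- There exists an absolute constant $C > 0$ such that for every prime $p \ge 2$, setting $\epsilon_p := \min\{2/3, \, 2/\log p\}$, the sum over all $p$-smooth positive integers $a$ satisfies $\sum_{a \ge 1, \; p^{+}(a) \le p} \frac{1}{a^{1 - \epsilon_p}} \le C \log(p+1)$. -/
/-!
Write `ε = ε_p`. By the Euler product, the sum is `∏_{q ≤ p} (1 - q^{ε-1})⁻¹`; compare it with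
`∏_{q ≤ p} (1 - q^{-1-ε})⁻¹ ≤ ζ(1 + ε) ≤ 1 + 1/ε ≪ log p`. Since `q^ε ≤ e²` for `q ≤ p`, the
ratio of the two `q`-factors is `exp(O(ε log q / q))`, and Mertens' estimate
`∑_{q ≤ p} log q / q ≤ log p + log 4` together with `ε log p ≤ 2` bounds the total ratio by an
absolute constant.
-/

open Finset Real
open Nat (primesLE prime_of_mem_primesLE)
open scoped Nat

theorem Nat.Prime.pow_div_dvd_factorial {q : ℕ} (hq : q.Prime) (n : ℕ) : q ^ (n / q) ∣ n ! := by
  rw [hq.pow_dvd_factorial_iff (Nat.lt_add_of_pos_right two_pos)]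
  simpa using single_le_sum (f := fun i => n / q ^ i) (fun _ _ => Nat.zero_le _)
    (show 1 ∈ Ico 1 (Nat.log q n + 2) by simp)

theorem prod_primesLE_pow_div_dvd_factorial (n : ℕ) :
    ∏ q ∈ primesLE n, q ^ (n / q) ∣ n ! :=
  prod_dvd_of_isRelPrime
    (fun _ ha _ hb hab => Nat.coprime_iff_isRelPrime.mp <|
      Nat.coprime_pow_primes _ _ (prime_of_mem_primesLE ha) (prime_of_mem_primesLE hb) hab)
    fun _ hq => (prime_of_mem_primesLE hq).pow_div_dvd_factorial n

theorem sum_primesLE_div_mul_log_le (n : ℕ) :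
    ∑ q ∈ primesLE n, ((n / q : ℕ) : ℝ) * log q ≤ n * log n := by
  have hpos : ∀ q ∈ primesLE n, 0 < q ^ (n / q) := fun q hq =>
    pow_pos (prime_of_mem_primesLE hq).pos _
  have hle : ∏ q ∈ primesLE n, q ^ (n / q) ≤ n ^ n :=
    (Nat.le_of_dvd n.factorial_pos (prod_primesLE_pow_div_dvd_factorial n)).trans
      n.factorial_le_pow
  calc ∑ q ∈ primesLE n, ((n / q : ℕ) : ℝ) * log q
      = log (∏ q ∈ primesLE n, q ^ (n / q) : ℕ) := by
        rw [Nat.cast_prod, log_prod fun q hq => by exact_mod_cast (hpos q hq).ne']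
        simp only [Nat.cast_pow, log_pow]
    _ ≤ log (n ^ n : ℕ) := log_le_log (by exact_mod_cast prod_pos hpos) (by exact_mod_cast hle)
    _ = n * log n := by rw [Nat.cast_pow, log_pow]

theorem sum_primesLE_log_div_le (n : ℕ) :
    ∑ q ∈ primesLE n, log q / q ≤ log n + log 4 := by
  rcases n.eq_zero_or_pos with rfl | hn
  · simpa using log_nonneg (by norm_num : (1 : ℝ) ≤ 4)
  have hfloor : ∀ q ∈ primesLE n, n * (log q / q) - log q ≤ ((n / q : ℕ) : ℝ) * log q := by
    intro q hq
    have hlog : 0 ≤ log q := log_nonneg (by exact_mod_cast (prime_of_mem_primesLE hq).one_le)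
    have := Nat.sub_one_lt_floor ((n : ℝ) / q)
    rw [Nat.floor_div_eq_div] at this
    nlinarith [show n * (log q / q) - log q = ((n : ℝ) / q - 1) * log q by ring]
  have htheta : ∑ q ∈ primesLE n, log q ≤ log 4 * n :=
    Chebyshev.theta_eq_sum_primesLE_log n ▸ Chebyshev.theta_le_log4_mul_x n.cast_nonneg
  have hsum : n * ∑ q ∈ primesLE n, log q / q ≤ n * (log n + log 4) := by
    have := (sum_le_sum hfloor).trans (sum_primesLE_div_mul_log_le n)
    rw [sum_sub_distrib, ← mul_sum] at this
    linarith
  exact le_of_mul_le_mul_left hsum (by exact_mod_cast hn)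

theorem tsum_nat_rpow_neg_le {s : ℝ} (hs : 1 < s) : ∑' n : ℕ, (n : ℝ) ^ (-s) ≤ 1 + 1 / (s - 1) := by
  have hsum : Summable fun n : ℕ => (n : ℝ) ^ (-s) := Real.summable_nat_rpow.mpr (by linarith)
  have htail : ∑' n : ℕ, ((n + 1 + 1 : ℕ) : ℝ) ^ (-s) ≤ ∫ x in Set.Ioi ((1 : ℕ) : ℝ), x ^ (-s) := by
    refine AntitoneOn.tsum_comp_add_le_integral (f := fun x => x ^ (-s)) 1 ?_ ?_ ?_
    · intro x hx y _ hxy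
      exact rpow_le_rpow_of_nonpos (by simp at hx; linarith) hxy (by linarith)
    · simpa using integrableOn_Ioi_rpow_of_lt (by linarith : -s < -1) one_pos
    · intro t ht
      exact rpow_nonneg (by simp at ht; linarith) _
  rw [Nat.cast_one, integral_Ioi_rpow_of_lt (by linarith) one_pos, one_rpow] at htail
  rw [← hsum.sum_add_tsum_nat_add 2]
  simp only [sum_range_succ, sum_range_zero, Nat.cast_zero, Nat.cast_one,
    zero_rpow (neg_ne_zero.mpr (by linarith : s ≠ 0)), one_rpow]
  have : -1 / (-s + 1) = 1 / (s - 1) := by rw [← neg_div_neg_eq]; ring_nf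
  simp only [Nat.cast_add, add_assoc, one_add_one_eq_two] at htail ⊢
  linarith

theorem tsum_smoothNumbers_rpow_neg_eq_prod {s : ℝ} (hs : 0 < s) (N : ℕ) :
    ∑' m : N.smoothNumbers, (m : ℝ) ^ (-s) = ∏ q ∈ N.primesBelow, (1 - (q : ℝ) ^ (-s))⁻¹ := by
  let f : ℕ →* ℝ :=
    { toFun n := (n : ℝ) ^ (-s)
      map_one' := by simp
      map_mul' m n := by push_cast; exact mul_rpow m.cast_nonneg n.cast_nonneg }
  refine (EulerProduct.summable_and_hasSum_smoothNumbers_prod_primesBelow_geometric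
    (f := f) (fun hq => ?_) N).2.tsum_eq
  change ‖((_ : ℕ) : ℝ) ^ (-s)‖ < 1
  rw [norm_of_nonneg (rpow_nonneg (Nat.cast_nonneg _) _)]
  exact rpow_lt_one_of_one_lt_of_neg (by exact_mod_cast hq.one_lt) (by linarith)

theorem inv_one_sub_le_mul_exp {x y : ℝ} (hyx : y ≤ x) (hx : x < 1) :
    (1 - x)⁻¹ ≤ (1 - y)⁻¹ * exp ((x - y) / (1 - x)) := by
  have hx' : 0 < 1 - x := by linarith
  calc (1 - x)⁻¹ = (1 - y)⁻¹ * ((x - y) / (1 - x) + 1) := by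
        field_simp [(by linarith : 1 - y ≠ 0)]; ring
    _ ≤ (1 - y)⁻¹ * exp ((x - y) / (1 - x)) :=
        mul_le_mul_of_nonneg_left (add_one_le_exp _) (inv_nonneg.mpr (by linarith))

theorem rpow_sub_rpow_le {q : ℝ} (hq : 0 < q) (a b : ℝ) :
    q ^ a - q ^ b ≤ q ^ a * ((a - b) * log q) := by
  have h : q ^ b = q ^ a * exp ((b - a) * log q) := by
    rw [rpow_def_of_pos hq, rpow_def_of_pos hq, ← exp_add]; ring_nf
  have := add_one_le_exp ((b - a) * log q)
  rw [h]
  nlinarith [rpow_nonneg hq.le a]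

theorem prod_inv_one_sub_le_mul_exp {ι : Type*} (s : Finset ι) {x y : ι → ℝ}
    (hyx : ∀ i ∈ s, y i ≤ x i) (hx : ∀ i ∈ s, x i < 1) :
    ∏ i ∈ s, (1 - x i)⁻¹ ≤ (∏ i ∈ s, (1 - y i)⁻¹) * exp (∑ i ∈ s, (x i - y i) / (1 - x i)) := by
  rw [exp_sum, ← prod_mul_distrib]
  exact prod_le_prod (fun i hi => inv_nonneg.mpr (by linarith [hx i hi]))
    fun i hi => inv_one_sub_le_mul_exp (hyx i hi) (hx i hi)

theorem rpow_neg_sub_rpow_neg_div_le {q ε : ℝ} (hq : 2 ≤ q) (hε : 0 ≤ ε) (hε23 : ε ≤ 2 / 3)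
    (hεq : ε * log q ≤ 2) :
    (q ^ (-(1 - ε)) - q ^ (-(1 + ε))) / (1 - q ^ (-(1 - ε))) ≤
      2 * exp 2 / (1 - 2 ^ (-(1 / 3) : ℝ)) * (ε * (log q / q)) := by
  have hq0 : 0 < q := by linarith
  have hc : 0 < 1 - (2 : ℝ) ^ (-(1 / 3) : ℝ) :=
    sub_pos.mpr (rpow_lt_one_of_one_lt_of_neg one_lt_two (by norm_num))
  have hyx : q ^ (-(1 + ε)) ≤ q ^ (-(1 - ε)) :=
    rpow_le_rpow_of_exponent_le (by linarith) (by linarith)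
  have hx_le : q ^ (-(1 - ε)) ≤ 2 ^ (-(1 / 3) : ℝ) :=
    (rpow_le_rpow_of_exponent_le (by linarith) (by linarith)).trans
      (rpow_le_rpow_of_nonpos two_pos hq (by norm_num))
  have hx_le_exp : q ^ (-(1 - ε)) ≤ exp 2 / q := by
    rw [neg_sub, rpow_sub_one hq0.ne', rpow_def_of_pos hq0, mul_comm]
    gcongr
  calc (q ^ (-(1 - ε)) - q ^ (-(1 + ε))) / (1 - q ^ (-(1 - ε)))
      ≤ (q ^ (-(1 - ε)) - q ^ (-(1 + ε))) / (1 - 2 ^ (-(1 / 3) : ℝ)) :=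
        div_le_div_of_nonneg_left (by linarith) hc (by linarith)
    _ ≤ q ^ (-(1 - ε)) * ((-(1 - ε) - -(1 + ε)) * log q) / (1 - 2 ^ (-(1 / 3) : ℝ)) := by
        gcongr; exact rpow_sub_rpow_le hq0 _ _
    _ ≤ exp 2 / q * ((-(1 - ε) - -(1 + ε)) * log q) / (1 - 2 ^ (-(1 / 3) : ℝ)) := by
        gcongr
        nlinarith [log_nonneg (by linarith : (1 : ℝ) ≤ q)]
    _ = 2 * exp 2 / (1 - 2 ^ (-(1 / 3) : ℝ)) * (ε * (log q / q)) := by ring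

theorem tsum_smoothNumbers_rpow_neg_le (p : ℕ) {ε : ℝ} (hε : 0 < ε) (hε23 : ε ≤ 2 / 3)
    (hεp : ε * log p ≤ 2) :
    ∑' m : (p + 1).smoothNumbers, (m : ℝ) ^ (-(1 - ε)) ≤
      (1 + 1 / ε) * exp (2 * exp 2 / (1 - 2 ^ (-(1 / 3) : ℝ)) * (2 + log 4)) := by
  set K := 2 * exp 2 / (1 - 2 ^ (-(1 / 3) : ℝ))
  have hK : 0 ≤ K := div_nonneg (by positivity)
    (sub_nonneg.mpr (rpow_le_one_of_one_le_of_nonpos one_le_two (by norm_num)))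
  have hprimes : ∀ q ∈ primesLE p, 2 ≤ (q : ℝ) ∧ ε * log q ≤ 2 := fun q hq =>
    ⟨by exact_mod_cast Nat.two_le_of_mem_primesLE hq, hεp.trans' <| by
      gcongr; exact_mod_cast (prime_of_mem_primesLE hq).pos; exact Nat.le_of_mem_primesLE hq⟩
  have hzeta : ∏ q ∈ primesLE p, (1 - (q : ℝ) ^ (-(1 + ε)))⁻¹ ≤ 1 + 1 / ε := by
    rw [primesLE, ← tsum_smoothNumbers_rpow_neg_eq_prod (by linarith)]
    refine ((Real.summable_nat_rpow.mpr (by linarith)).tsum_subtype_le _ _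
      fun n => rpow_nonneg n.cast_nonneg _).trans ?_
    simpa using tsum_nat_rpow_neg_le (s := 1 + ε) (by linarith)
  have hexp : ∑ q ∈ primesLE p, ((q : ℝ) ^ (-(1 - ε)) - (q : ℝ) ^ (-(1 + ε))) /
      (1 - (q : ℝ) ^ (-(1 - ε))) ≤ K * (2 + log 4) := calc
    _ ≤ ∑ q ∈ primesLE p, K * (ε * (log q / q)) := sum_le_sum fun q hq =>
        rpow_neg_sub_rpow_neg_div_le (hprimes q hq).1 hε.le hε23 (hprimes q hq).2
    _ = K * (ε * ∑ q ∈ primesLE p, log q / q) := by rw [mul_sum, mul_sum]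
    _ ≤ K * (ε * (log p + log 4)) := by gcongr; exact sum_primesLE_log_div_le p
    _ ≤ K * (2 + log 4) := by
        gcongr
        nlinarith [log_nonneg (by norm_num : (1 : ℝ) ≤ 4)]
  rw [tsum_smoothNumbers_rpow_neg_eq_prod (by linarith)]
  refine (prod_inv_one_sub_le_mul_exp _ (fun q hq => ?_) fun q hq => ?_).trans
    (mul_le_mul hzeta (exp_le_exp.mpr hexp) (exp_pos _).le (by positivity))
  · exact rpow_le_rpow_of_exponent_le (by linarith [(hprimes q hq).1]) (by linarith)
  · exact rpow_lt_one_of_one_lt_of_neg (by linarith [(hprimes q hq).1]) (by linarith)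

theorem mem_smoothNumbers_succ_iff {p a : ℕ} :
    a ∈ (p + 1).smoothNumbers ↔ 0 < a ∧ ∀ q : ℕ, q.Prime → q ∣ a → q ≤ p := by
  simp only [Nat.mem_smoothNumbers, Nat.pos_iff_ne_zero, Nat.lt_succ_iff]
  refine and_congr_right fun ha => ⟨fun h q hq hqa => h q ?_, fun h q hq => h q ?_ ?_⟩
  · exact (Nat.mem_primeFactorsList ha).mpr ⟨hq, hqa⟩
  · exact Nat.prime_of_mem_primeFactorsList hq
  · exact Nat.dvd_of_mem_primeFactorsList hq

theorem one_add_one_div_min_le {p : ℕ} (hp : 2 ≤ p) :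
    1 + 1 / min (2 / 3 : ℝ) (2 / log p) ≤ 3 * log (p + 1) := by
  have hp' : (2 : ℝ) ≤ p := by exact_mod_cast hp
  have hinv : 1 / min (2 / 3 : ℝ) (2 / log p) ≤ 3 / 2 + log p / 2 := by
    have := log_nonneg (by linarith : (1 : ℝ) ≤ p)
    rcases min_choice (2 / 3 : ℝ) (2 / log p) with h | h <;> rw [h, one_div_div] <;> linarith
  have hlog_succ : log p ≤ log (p + 1) := log_le_log (by linarith) (by linarith)
  have hone : 1 ≤ log (p + 1) := by
    rw [le_log_iff_exp_le (by linarith)]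
    linarith [exp_one_lt_d9]
  linarith

theorem stmt12 :
    ∃ C : ℝ, 0 < C ∧ ∀ p : ℕ, p.Prime →
      ∑' a : {a : ℕ // 0 < a ∧ ∀ q : ℕ, q.Prime → q ∣ a → q ≤ p},
        (1 : ℝ) / ((a : ℕ) : ℝ) ^ (1 - min (2 / 3 : ℝ) (2 / Real.log p))
      ≤ C * Real.log (p + 1) := by
  set K := exp (2 * exp 2 / (1 - 2 ^ (-(1 / 3) : ℝ)) * (2 + log 4))
  refine ⟨3 * K, by positivity, fun p hp => ?_⟩
  set ε := min (2 / 3 : ℝ) (2 / log p)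
  have hlogp : 0 < log p := log_pos (by exact_mod_cast hp.one_lt)
  have hε : 0 < ε := lt_min (by norm_num) (by positivity)
  have hεp : ε * log p ≤ 2 := (mul_le_mul_of_nonneg_right (min_le_right _ _) hlogp.le).trans_eq
    (div_mul_cancel₀ _ hlogp.ne')
  have hsum : ∑' a : {a : ℕ // 0 < a ∧ ∀ q : ℕ, q.Prime → q ∣ a → q ≤ p},
      (1 : ℝ) / ((a : ℕ) : ℝ) ^ (1 - ε) = ∑' m : (p + 1).smoothNumbers, (m : ℝ) ^ (-(1 - ε)) := by
    rw [← (Equiv.subtypeEquivRight fun _ => mem_smoothNumbers_succ_iff).tsum_eq]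
    exact tsum_congr fun a => by rw [rpow_neg (Nat.cast_nonneg _), one_div]; rfl
  calc _ = ∑' m : (p + 1).smoothNumbers, (m : ℝ) ^ (-(1 - ε)) := hsum
    _ ≤ (1 + 1 / ε) * K := tsum_smoothNumbers_rpow_neg_le p hε (min_le_left _ _) hεp
    _ ≤ 3 * log (p + 1) * K := by gcongr; exact one_add_one_div_min_le hp.two_le
    _ = 3 * K * log (p + 1) := by ring
end

section
/- There exists an absolute constant $C > 0$ such that the following holds. Let $\alpha \in (0, 1]$ and let $y \ge 3$ and $w \ge 2$ be real numbers with $\log w \le \alpha \log y$. Then $\sum_{100 < p \le w} \frac{1}{p} \exp\left( - \alpha \frac{\log y}{\log p} \right) \le C \exp\left( - \alpha \frac{\log y}{\log w} \right)$, where the sum is over primes $p$ with $100 < p \le w$. -/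
open scoped Classical
open Finset Real Chebyshev

/-!
Put `L = α log y` and `B = log w`, so `B ≤ L`. For `a = log p ≤ B` one has
`-L/a ≤ 1 - L/B - B/a`, because the difference is `(L - B)(B - a)/(aB) ≥ 0`; with
`exp (-B/a) ≤ a/B` each term is at most `e · exp (-L/B) · log p / (p B)`. It remains to see
`∑_{p ≤ w} log p / p ≤ 8 log w`, which follows from Chebyshev's bound `θ(x) ≤ x log 4` applied
on each dyadic block `2^j ≤ p ≤ 2^(j+1)`.
-/

theorem Real.exp_neg_le_inv {t : ℝ} (ht : 0 < t) : exp (-t) ≤ t⁻¹ := by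
  rw [exp_neg]
  exact inv_anti₀ ht (by linarith [add_one_le_exp t])

theorem Real.exp_neg_div_le {a B L : ℝ} (ha : 0 < a) (haB : a ≤ B) (hBL : B ≤ L) :
    exp (-L / a) ≤ exp 1 * exp (-L / B) * (a / B) := by
  have hB : 0 < B := ha.trans_le haB
  have hexponent : -L / a ≤ 1 + -L / B + -(B / a) := by
    have hgap : 1 + -L / B + -(B / a) - -L / a = (L - B) * (B - a) / (a * B) := by
      field_simp
      ring
    have : 0 ≤ (L - B) * (B - a) / (a * B) := by
      apply div_nonneg <;> nlinarith
    linarith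
  calc exp (-L / a) ≤ exp 1 * exp (-L / B) * exp (-(B / a)) := by
        rw [← exp_add, ← exp_add]
        exact exp_le_exp.2 hexponent
    _ ≤ exp 1 * exp (-L / B) * (a / B) := by
        gcongr
        simpa using exp_neg_le_inv (div_pos hB ha)

theorem Chebyshev.sum_primesLE_log_div_dyadic_le (j : ℕ) :
    ∑ p ∈ Nat.primesLE (2 ^ (j + 1)) with 2 ^ j ≤ p, log p / p ≤ 2 * log 4 := by
  calc ∑ p ∈ Nat.primesLE (2 ^ (j + 1)) with 2 ^ j ≤ p, log p / p
      ≤ ∑ p ∈ Nat.primesLE (2 ^ (j + 1)) with 2 ^ j ≤ p, log p / 2 ^ j := by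
        refine sum_le_sum fun p hp => ?_
        have hjp := (mem_filter.1 hp).2
        have hlog : 0 ≤ log p := log_natCast_nonneg p
        gcongr
        exact_mod_cast hjp
    _ ≤ θ ((2 ^ (j + 1) : ℕ) : ℝ) / 2 ^ j := by
        rw [← sum_div, theta_eq_sum_primesLE_log]
        gcongr
        exact filter_subset _ _
    _ ≤ log 4 * 2 ^ (j + 1) / 2 ^ j := by
        gcongr
        simpa using theta_le_log4_mul_x (by positivity : (0 : ℝ) ≤ (2 ^ (j + 1) : ℕ))
    _ = 2 * log 4 := by
        field_simp
        ring

theorem Chebyshev.sum_primesLE_log_div_le_natLog (n : ℕ) :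
    ∑ p ∈ Nat.primesLE n, log p / p ≤ 2 * log 4 * (Nat.log 2 n + 1) := by
  have hmaps : ∀ p ∈ Nat.primesLE n, Nat.log 2 p ∈ range (Nat.log 2 n + 1) := fun p hp =>
    mem_range.2 (Nat.lt_succ_of_le (Nat.log_mono_right (Nat.mem_primesLE.1 hp).1))
  rw [← sum_fiberwise_of_maps_to hmaps]
  calc ∑ j ∈ range (Nat.log 2 n + 1), ∑ p ∈ Nat.primesLE n with Nat.log 2 p = j, log p / p
      ≤ ∑ j ∈ range (Nat.log 2 n + 1), 2 * log 4 := by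
        refine sum_le_sum fun j _ => le_trans ?_ (sum_primesLE_log_div_dyadic_le j)
        refine sum_le_sum_of_subset_of_nonneg ?_ fun p _ _ => by positivity
        intro p hp
        obtain ⟨hpn, rfl⟩ := mem_filter.1 hp
        have hprime := (Nat.mem_primesLE.1 hpn).2
        refine mem_filter.2 ⟨Nat.mem_primesLE.2 ⟨?_, hprime⟩,
          Nat.pow_log_le_self 2 hprime.ne_zero⟩
        exact (Nat.lt_pow_succ_log_self (by norm_num) p).le
    _ = 2 * log 4 * (Nat.log 2 n + 1) := by
        simp only [sum_const, card_range, nsmul_eq_mul]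
        push_cast
        ring

theorem Chebyshev.sum_primesLE_log_div_le {x : ℝ} (hx : 2 ≤ x) :
    ∑ p ∈ Nat.primesLE ⌊x⌋₊, log p / p ≤ 8 * log x := by
  have hfloor : (0 : ℝ) < ⌊x⌋₊ := by
    exact_mod_cast (Nat.floor_pos.2 (by linarith : (1 : ℝ) ≤ x))
  have hlog2 : 0 < log 2 := log_pos one_lt_two
  have hblocks : (Nat.log 2 ⌊x⌋₊ : ℝ) * log 2 ≤ log x := by
    have h := Real.natLog_le_logb ⌊x⌋₊ 2
    rw [Real.logb, Nat.cast_ofNat, le_div_iff₀ hlog2] at h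
    exact h.trans (log_le_log hfloor (Nat.floor_le (by linarith)))
  have hx2 : log 2 ≤ log x := log_le_log two_pos hx
  have hlog4 : log 4 = 2 * log 2 := by
    rw [show (4 : ℝ) = 2 ^ 2 by norm_num, log_pow]
    norm_num
  refine (sum_primesLE_log_div_le_natLog ⌊x⌋₊).trans ?_
  rw [hlog4]
  nlinarith

theorem stmt13 :
    ∃ C : ℝ, 0 < C ∧ ∀ α y w : ℝ, 0 < α → α ≤ 1 → 3 ≤ y → 2 ≤ w →
      Real.log w ≤ α * Real.log y →
      ∑ p ∈ (Finset.range (⌊w⌋₊ + 1)).filter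
          (fun p : ℕ => p.Prime ∧ 100 < p ∧ (p : ℝ) ≤ w),
        ((1 : ℝ) / (p : ℝ)) * Real.exp (-α * Real.log y / Real.log p)
      ≤ C * Real.exp (-α * Real.log y / Real.log w) := by
  refine ⟨8 * exp 1, by positivity, fun α y w _ _ _ hw hwy => ?_⟩
  set K := exp 1 * exp (-(α * log y) / log w) / log w with hK
  have hB : 0 < log w := log_pos (by linarith)
  have hsub : (range (⌊w⌋₊ + 1)).filter (fun p : ℕ => p.Prime ∧ 100 < p ∧ (p : ℝ) ≤ w)
      ⊆ Nat.primesLE ⌊w⌋₊ := fun p hp => by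
    simp only [mem_filter, mem_range] at hp
    exact Nat.mem_primesLE.2 ⟨Nat.lt_succ_iff.1 hp.1, hp.2.1⟩
  calc _ ≤ ∑ p ∈ (range (⌊w⌋₊ + 1)).filter (fun p : ℕ => p.Prime ∧ 100 < p ∧ (p : ℝ) ≤ w),
          K * (log p / p) := by
        refine sum_le_sum fun p hp => ?_
        obtain ⟨-, hprime, -, hpw⟩ := mem_filter.1 hp
        have hp1 : (1 : ℝ) < p := by exact_mod_cast hprime.one_lt
        have h := exp_neg_div_le (log_pos hp1) (log_le_log (by linarith) hpw) hwy
        rw [neg_mul]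
        calc 1 / (p : ℝ) * exp (-(α * log y) / log p)
            ≤ 1 / p * (exp 1 * exp (-(α * log y) / log w) * (log p / log w)) := by gcongr
          _ = K * (log p / p) := by ring
    _ ≤ K * ∑ p ∈ Nat.primesLE ⌊w⌋₊, log p / p := by
        rw [← mul_sum]
        gcongr
    _ ≤ K * (8 * log w) := by gcongr; exact sum_primesLE_log_div_le hw
    _ = 8 * exp 1 * exp (-α * log y / log w) := by
        rw [hK, neg_mul]
        field_simp
end
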